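/- arXiv:0808.3499 — 5 statements merged into one kernel-verified Lean document; each statement's English description precedes it below -/
import Mathlib

section
/- Assume condition (INV). If g ∈ ℂ^N[x] is a polynomial of degree at most S and y is a solution of y'(x) + B(x) y(x) = Q(x)^{−1} g(x) which is analytic at every one of the singular points p_0, …, p_{S+1} (equivalently, y is entire), then g ≡ 0 and y ≡ 0. -/
/-
Multiplied by `Q`, the equation becomes `Q y' + A y = g`, where `A(x) = Q(x) B(x)` is a matrix
polynomial. It has a regular singular point at infinity: for large `|x|` it gives
`|x| |y'| ≤ C (|y| + 1)`, and Gronwall's inequality along the rays `s ↦ eˢ u` shows that an entire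
solution grows polynomially, so `y` is a polynomial by the generalized Liouville theorem.
If `deg y ≤ k`, the coefficient of `x^(S+1+k)` in `Q y' + A y = g` reads `(k + B_∞) y_k = 0`,
because `Q` is monic of degree `S + 2`, `A` has degree `S + 1` with leading coefficient `B_∞`, and
`deg g ≤ S`. Invertibility of `k + B_∞` kills the coefficients of `y` one by one from the top,
so `y = 0`, and then `g = Q y' + A y = 0`.
-/

open Matrix Set Polynomial Filter Bornology Lagrange Finset
open scoped Matrix.Norms.Operator

lemma Complex.differentiable_dslope {E : Type*} [NormedAddCommGroup E] [NormedSpace ℂ E]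
    [CompleteSpace E] {f : ℂ → E} {c : ℂ} : Differentiable ℂ (dslope f c) ↔ Differentiable ℂ f := by
  simpa only [differentiableOn_univ] using Complex.differentiableOn_dslope (f := f) univ_mem

lemma Differentiable.exists_norm_dslope_zero_le {f : ℂ → ℂ} (hf : Differentiable ℂ f) {K : ℝ}
    {D : ℕ} (hb : ∀ x, ‖f x‖ ≤ K * max 1 ‖x‖ ^ (D + 1)) :
    ∃ K' : ℝ, ∀ x, ‖dslope f 0 x‖ ≤ K' * max 1 ‖x‖ ^ D := by
  obtain ⟨M, hM⟩ := (isCompact_closedBall (0 : ℂ) 1).exists_bound_of_continuousOn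
    (Complex.differentiable_dslope.2 hf).continuous.continuousOn
  have hf0 : ‖f 0‖ ≤ K := by simpa using hb 0
  have hK0 : 0 ≤ K := (norm_nonneg _).trans hf0
  refine ⟨max M (2 * K), fun x => ?_⟩
  have hpow : 1 ≤ max 1 ‖x‖ ^ D := one_le_pow₀ (le_max_left _ _)
  rcases le_or_gt ‖x‖ 1 with hx | hx
  · calc ‖dslope f 0 x‖ ≤ M := hM x (by simpa using hx)
      _ ≤ max M (2 * K) := le_max_left _ _
      _ ≤ max M (2 * K) * max 1 ‖x‖ ^ D :=
        le_mul_of_one_le_right ((by positivity : (0 : ℝ) ≤ 2 * K).trans (le_max_right _ _)) hpow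
  · have hx0 : x ≠ 0 := norm_pos_iff.mp (zero_lt_one.trans hx)
    rw [max_eq_right hx.le] at hpow ⊢
    have hfx := hb x
    rw [max_eq_right hx.le, pow_succ] at hfx
    rw [dslope_of_ne f hx0, slope_def_field, sub_zero, norm_div, div_le_iff₀ (by positivity)]
    calc ‖f x - f 0‖ ≤ K * (‖x‖ ^ D * ‖x‖) + K := (norm_sub_le _ _).trans (add_le_add hfx hf0)
      _ ≤ 2 * K * ‖x‖ ^ D * ‖x‖ := by
        nlinarith [le_mul_of_one_le_right hK0 (one_le_mul_of_one_le_of_one_le hpow hx.le)]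
      _ ≤ max M (2 * K) * ‖x‖ ^ D * ‖x‖ := by gcongr; exact le_max_right _ _

theorem Differentiable.exists_polynomial_eq_of_norm_le {f : ℂ → ℂ} (hf : Differentiable ℂ f)
    {K : ℝ} {D : ℕ} (hb : ∀ x, ‖f x‖ ≤ K * max 1 ‖x‖ ^ D) : ∃ q : ℂ[X], ∀ x, f x = q.eval x := by
  induction D generalizing f K with
  | zero =>
    have hbdd : IsBounded (range f) :=
      isBounded_iff_forall_norm_le.mpr ⟨K, by simpa using hb⟩
    exact ⟨C (f 0), fun x => by rw [eval_C, hf.apply_eq_apply_of_bounded hbdd x 0]⟩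
  | succ D ih =>
    obtain ⟨K', hK'⟩ := hf.exists_norm_dslope_zero_le hb
    obtain ⟨q, hq⟩ := ih (Complex.differentiable_dslope.2 hf) hK'
    refine ⟨C (f 0) + X * q, fun x => ?_⟩
    have h := sub_smul_dslope f 0 x
    rw [sub_zero, smul_eq_mul, hq] at h
    rw [eval_add, eval_C, eval_mul, eval_X, h, add_sub_cancel]

theorem exists_polynomial_pi_eq_of_norm_le {ι : Type*} [Fintype ι] {y : ℂ → ι → ℂ}
    (hy : Differentiable ℂ y) {K : ℝ} {D : ℕ} (hb : ∀ x, ‖y x‖ ≤ K * max 1 ‖x‖ ^ D) :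
    ∃ Y : ι → ℂ[X], y = fun x i => (Y i).eval x := by
  choose Y hY using fun i => (differentiable_pi.1 hy i).exists_polynomial_eq_of_norm_le
    fun x => (norm_le_pi_norm (y x) i).trans (hb x)
  exact ⟨Y, funext fun x => funext fun i => hY i x⟩

section Growth

variable {E : Type*} [NormedAddCommGroup E] [NormedSpace ℂ E]

lemma norm_le_gronwallBound_log {y : ℂ → E} (hy : Differentiable ℂ y)
    {C M R : ℝ} (hR : 0 < R) (hM : ∀ x, ‖x‖ = R → ‖y x‖ ≤ M)
    (hb : ∀ x, R ≤ ‖x‖ → ‖x‖ * ‖deriv y x‖ ≤ C * (‖y x‖ + 1)) {x : ℂ} (hx : R ≤ ‖x‖) :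
    ‖y x‖ ≤ gronwallBound M C C (Real.log ‖x‖ - Real.log R) := by
  have hx0 : 0 < ‖x‖ := hR.trans_le hx
  -- the ray `s ↦ e^s x / ‖x‖` turns the bound `‖x‖ ‖y'‖ ≤ C (‖y‖ + 1)` into Gronwall's hypothesis
  set c : ℝ → ℂ := fun s => (Real.exp s : ℂ) * (x / ‖x‖)
  have hc : ∀ s, HasDerivAt c (c s) s := fun s =>
    ((Real.hasDerivAt_exp s).ofReal_comp).mul_const _
  have hnorm : ∀ s, ‖c s‖ = Real.exp s := fun s => by
    simp [c, hx0.ne']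
  have hcx : c (Real.log ‖x‖) = x := by
    have : (‖x‖ : ℂ) ≠ 0 := by exact_mod_cast hx0.ne'
    simp only [c, Real.exp_log hx0]
    field_simp
  have hgr := norm_le_gronwallBound_of_norm_deriv_right_le (f := y ∘ c)
    (f' := fun s => c s • deriv y (c s)) (K := C) (ε := C) (a := Real.log R) (b := Real.log ‖x‖)
    (hy.continuous.comp (continuous_iff_continuousAt.2 fun s => (hc s).continuousAt)).continuousOn
    (fun s _ => ((hy (c s)).hasDerivAt.scomp s (hc s)).hasDerivWithinAt)
    (hM _ (by rw [hnorm, Real.exp_log hR]))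
    (fun s hs => by
      rw [norm_smul, Function.comp_apply, ← mul_add_one]
      exact hb _ (by rw [hnorm, ← Real.exp_log hR]; exact Real.exp_le_exp.2 hs.1))
    (Real.log ‖x‖) ⟨Real.log_le_log hR hx, le_rfl⟩
  rwa [Function.comp_apply, hcx] at hgr

theorem exists_norm_le_mul_max_one_pow_of_norm_mul_deriv_le {y : ℂ → E} (hy : Differentiable ℂ y)
    {C : ℝ} (hb : ∀ᶠ x in cobounded ℂ, ‖x‖ * ‖deriv y x‖ ≤ C * (‖y x‖ + 1)) :
    ∃ K : ℝ, ∃ D : ℕ, ∀ x, ‖y x‖ ≤ K * max 1 ‖x‖ ^ D := by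
  obtain ⟨R, -, hR⟩ := hasBasis_cobounded_norm.eventually_iff.mp hb
  set R₁ := max R 1
  have hR₁ : 1 ≤ R₁ := le_max_right _ _
  have hR₁0 : 0 < R₁ := zero_lt_one.trans_le hR₁
  obtain ⟨M, hM⟩ := (isCompact_closedBall (0 : ℂ) R₁).exists_bound_of_continuousOn
    hy.continuous.continuousOn
  have hM0 : 0 ≤ M := (norm_nonneg _).trans (hM 0 (by simp; linarith))
  set D := ⌈C⌉₊ + 1
  have hD : C ≤ D := (Nat.le_ceil C).trans (by simp [D])
  refine ⟨M + 1, D, fun x => ?_⟩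
  have hpow : 1 ≤ max 1 ‖x‖ ^ D := one_le_pow₀ (le_max_left _ _)
  rcases le_or_gt ‖x‖ R₁ with hx | hx
  · nlinarith [hM x (by simpa using hx)]
  have hgr := norm_le_gronwallBound_log hy (C := D) hR₁0
    (fun z hz => hM z (by simp [hz]))
    (fun z hz => (hR (x := z) ((le_max_left _ _).trans hz)).trans (by gcongr))
    hx.le
  have hx0 : 0 < ‖x‖ := hR₁0.trans hx
  have hexp : Real.exp (D * (Real.log ‖x‖ - Real.log R₁)) ≤ max 1 ‖x‖ ^ D := by
    rw [← Real.log_div hx0.ne' hR₁0.ne', Real.exp_nat_mul, Real.exp_log (by positivity)]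
    gcongr
    exact (div_le_self hx0.le hR₁).trans (le_max_right _ _)
  rw [gronwallBound_of_K_ne_0 (by positivity), div_self (by positivity)] at hgr
  nlinarith [Real.exp_pos (D * (Real.log ‖x‖ - Real.log R₁))]

end Growth

namespace Polynomial

variable {R ι : Type*} [CommRing R] [Fintype ι] {d k : ℕ} {Q P : R[X]}
  {A : Matrix ι ι R[X]} {M : Matrix ι ι R} {Y G : ι → R[X]}

lemma coeff_mul_derivative_of_natDegree_le (hQ : Q.natDegree ≤ d + 1) (hP : P.natDegree ≤ k) :
    (Q * derivative P).coeff (d + k) = k * Q.coeff (d + 1) * P.coeff k := by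
  cases k with
  | zero => simp [derivative_of_natDegree_zero (Nat.le_zero.mp hP)]
  | succ k =>
    have hP' : (derivative P).natDegree ≤ k := (natDegree_derivative_le P).trans (by omega)
    rw [show d + (k + 1) = (d + 1) + k by omega, coeff_mul_add_eq_of_natDegree_le hQ hP',
      coeff_derivative]
    push_cast
    ring

lemma coeff_mulVec_of_natDegree_le (hA : ∀ i l, (A i l).natDegree ≤ d)
    (hY : ∀ l, (Y l).natDegree ≤ k) (i : ι) :
    ((A *ᵥ Y) i).coeff (d + k) = (A.map (coeff · d) *ᵥ fun l => (Y l).coeff k) i := by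
  simp only [mulVec, dotProduct, finsetSum_coeff, map_apply,
    coeff_mul_add_eq_of_natDegree_le (hA i _) (hY _)]

lemma coeff_eq_zero_of_mul_derivative_add_mulVec_eq [DecidableEq ι] (hQ : Q.natDegree ≤ d + 1)
    (hQ1 : Q.coeff (d + 1) = 1) (hA : ∀ i l, (A i l).natDegree ≤ d) (hAM : A.map (coeff · d) = M)
    (hG : ∀ i, (G i).degree < d) (hY : ∀ i, Q * derivative (Y i) + (A *ᵥ Y) i = G i)
    (hk : IsUnit ((k : R) • (1 : Matrix ι ι R) + M)) (hdeg : ∀ l, (Y l).natDegree ≤ k) :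
    (fun l => (Y l).coeff k) = 0 := by
  refine mulVec_injective_of_isUnit hk ?_
  ext i
  have h := congrArg (coeff · (d + k)) (hY i)
  simp only [coeff_add, coeff_mul_derivative_of_natDegree_le hQ (hdeg i), hQ1,
    coeff_mulVec_of_natDegree_le hA hdeg, hAM,
    coeff_eq_zero_of_degree_lt ((hG i).trans_le (by exact_mod_cast Nat.le_add_right d k))] at h
  simpa [add_mulVec, smul_mulVec] using h

theorem eq_zero_of_mul_derivative_add_mulVec_eq [DecidableEq ι] (hQ : Q.natDegree ≤ d + 1)
    (hQ1 : Q.coeff (d + 1) = 1) (hA : ∀ i l, (A i l).natDegree ≤ d) (hAM : A.map (coeff · d) = M)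
    (hG : ∀ i, (G i).degree < d) (hY : ∀ i, Q * derivative (Y i) + (A *ᵥ Y) i = G i)
    (hM : ∀ k : ℕ, IsUnit ((k : R) • (1 : Matrix ι ι R) + M)) : Y = 0 := by
  have hcoeff k := coeff_eq_zero_of_mul_derivative_add_mulVec_eq hQ hQ1 hA hAM hG hY (hM k)
  suffices ∀ k, (∀ l, (Y l).natDegree ≤ k) → Y = 0 from
    this _ fun l => le_sup (f := fun l => (Y l).natDegree) (mem_univ l)
  intro k
  induction k with
  | zero =>
    intro hdeg
    ext1 l
    rw [eq_C_of_natDegree_le_zero (hdeg l), congrFun (hcoeff 0 hdeg) l]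
    simp
  | succ k ih =>
    intro hdeg
    refine ih fun l => natDegree_le_iff_coeff_eq_zero.mpr fun n hn => ?_
    rcases (Nat.succ_le_of_lt hn).eq_or_lt with rfl | hn'
    · exact congrFun (hcoeff _ hdeg) l
    · exact natDegree_le_iff_coeff_eq_zero.mp (hdeg l) n hn'

end Polynomial

section Asymptotics

variable {ι n : Type*} [Fintype ι] [Fintype n]

lemma eventually_norm_le_two_mul_norm_sub {E : Type*} [NormedAddCommGroup E] (a : E) :
    ∀ᶠ x in cobounded E, ‖x‖ ≤ 2 * ‖x - a‖ := by
  filter_upwards [eventually_cobounded_le_norm (2 * ‖a‖)] with x hx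
  linarith [norm_sub_norm_le x a]

lemma eventually_norm_smul_sum_inv_sub_smul_le (p : ι → ℂ) (B : ι → Matrix n n ℂ) :
    ∀ᶠ x in cobounded ℂ, ‖x • ∑ j, (x - p j)⁻¹ • B j‖ ≤ 2 * ∑ j, ‖B j‖ := by
  filter_upwards [eventually_all.2 fun j => eventually_norm_le_two_mul_norm_sub (p j)] with x hx
  rw [smul_sum, mul_sum]
  refine (norm_sum_le _ _).trans (sum_le_sum fun j _ => ?_)
  rw [smul_smul, norm_smul, norm_mul, norm_inv, ← div_eq_mul_inv]
  gcongr
  exact div_le_of_le_mul₀ (norm_nonneg _) zero_le_two (hx j)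

lemma exists_eventually_norm_smul_inv_prod_smul_le (p : ι → ℂ) {g : n → ℂ[X]}
    (hg : ∀ i, (g i).degree < Fintype.card ι) :
    ∃ c, ∀ᶠ x in cobounded ℂ, ‖x • (∏ j, (x - p j))⁻¹ • fun i => (g i).eval x‖ ≤ c := by
  have hO : (fun x => x • fun i => (g i).eval x) =O[cobounded ℂ] (nodal univ p).eval := by
    refine Asymptotics.isBigO_pi.2 fun i => ?_
    have hdeg : (g i * X).degree ≤ (nodal univ p).degree := by
      rw [degree_mul_X, degree_nodal, card_univ]
      exact Nat.WithBot.add_one_le_of_lt (hg i)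
    simpa [mul_comm] using isBigO_cobounded_of_degree_le hdeg
  obtain ⟨c, hc0, hc⟩ := hO.exists_nonneg
  refine ⟨c, ?_⟩
  filter_upwards [hc.bound] with x hx
  rw [smul_comm, norm_smul, norm_inv]
  exact inv_mul_le_of_le_mul₀ (norm_nonneg _) hc0 (by simpa [eval_nodal, mul_comm] using hx)

lemma exists_eventually_norm_mul_norm_deriv_le {p : ι → ℂ} {B : ι → Matrix n n ℂ}
    {g : n → ℂ[X]} (hg : ∀ i, (g i).degree < Fintype.card ι) {y : ℂ → n → ℂ}
    (hy : ∀ x ∉ range p, HasDerivAt y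
      ((∏ j, (x - p j))⁻¹ • (fun i => (g i).eval x) - (∑ j, (x - p j)⁻¹ • B j) *ᵥ y x) x) :
    ∃ C, ∀ᶠ x in cobounded ℂ, ‖x‖ * ‖deriv y x‖ ≤ C * (‖y x‖ + 1) := by
  obtain ⟨c, hc⟩ := exists_eventually_norm_smul_inv_prod_smul_le p hg
  set b := 2 * ∑ j, ‖B j‖
  refine ⟨max c b, ?_⟩
  filter_upwards [hc, eventually_norm_smul_sum_inv_sub_smul_le p B,
    isBounded_def.1 (finite_range p).isBounded] with x hgx hBx hx
  rw [(hy x hx).deriv, ← norm_smul, smul_sub, ← smul_mulVec]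
  calc _ ≤ c + b * ‖y x‖ :=
        (norm_sub_le _ _).trans (add_le_add hgx ((linfty_opNorm_mulVec _ _).trans (by gcongr)))
    _ ≤ _ := by nlinarith [le_max_left c b, le_max_right c b, norm_nonneg (y x)]

end Asymptotics

section ClearedCoeffMatrix

variable {ι n : Type*} [Fintype ι] [DecidableEq ι]

/-- The matrix polynomial `Q(x) B(x) = ∑ⱼ (∏_{m ≠ j} (x - pₘ)) Bⱼ`, where `Q = nodal univ p`. -/
noncomputable def clearedCoeffMatrix (p : ι → ℂ) (B : ι → Matrix n n ℂ) : Matrix n n ℂ[X] :=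
  ∑ j, nodal (univ.erase j) p • (B j).map C

lemma clearedCoeffMatrix_apply (p : ι → ℂ) (B : ι → Matrix n n ℂ) (i l : n) :
    clearedCoeffMatrix p B i l = ∑ j, nodal (univ.erase j) p * C (B j i l) := by
  simp [clearedCoeffMatrix, Matrix.sum_apply]

lemma natDegree_clearedCoeffMatrix_le {d : ℕ} (hd : Fintype.card ι = d + 1) (p : ι → ℂ)
    (B : ι → Matrix n n ℂ) (i l : n) : (clearedCoeffMatrix p B i l).natDegree ≤ d := by
  rw [clearedCoeffMatrix_apply]
  refine natDegree_sum_le_of_forall_le _ _ fun j _ => (natDegree_mul_C_le _ _).trans ?_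
  simp [natDegree_nodal, card_erase_of_mem, hd]

lemma clearedCoeffMatrix_map_coeff {d : ℕ} (hd : Fintype.card ι = d + 1) (p : ι → ℂ)
    (B : ι → Matrix n n ℂ) : (clearedCoeffMatrix p B).map (coeff · d) = ∑ j, B j := by
  ext i l
  have hlead : ∀ j, (nodal (univ.erase j) p).coeff d = 1 := fun j => by
    simpa [natDegree_nodal, card_erase_of_mem, hd] using
      (nodal_monic (s := univ.erase j) (v := p)).coeff_natDegree
  simp [clearedCoeffMatrix_apply, finsetSum_coeff, coeff_mul_C, hlead, Matrix.sum_apply]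

lemma clearedCoeffMatrix_map_eval (p : ι → ℂ) (B : ι → Matrix n n ℂ) {x : ℂ} (hx : x ∉ range p) :
    (clearedCoeffMatrix p B).map (eval x) = (∏ j, (x - p j)) • ∑ j, (x - p j)⁻¹ • B j := by
  have hnode : ∀ j, (∏ m, (x - p m)) * (x - p j)⁻¹ = eval x (nodal (univ.erase j) p) := fun j => by
    rw [← eval_nodal, nodal_eq_mul_nodal_erase (mem_univ j), eval_mul, eval_sub, eval_X, eval_C,
      mul_comm, ← mul_assoc, inv_mul_cancel₀ (sub_ne_zero.2 fun h => hx ⟨j, h.symm⟩), one_mul]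
  ext i l
  simp [clearedCoeffMatrix_apply, eval_finsetSum, Matrix.sum_apply, mul_sum, ← hnode, mul_assoc]

variable [Fintype n]

lemma nodal_mul_derivative_add_clearedCoeffMatrix_mulVec_eq {p : ι → ℂ} {B : ι → Matrix n n ℂ}
    {g Y : n → ℂ[X]}
    (hY : ∀ x ∉ range p, HasDerivAt (fun t i => (Y i).eval t)
      ((∏ j, (x - p j))⁻¹ • (fun i => (g i).eval x)
        - (∑ j, (x - p j)⁻¹ • B j) *ᵥ fun i => (Y i).eval x) x) (i : n) :
    nodal univ p * derivative (Y i) + (clearedCoeffMatrix p B *ᵥ Y) i = g i := by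
  refine eq_of_infinite_eval_eq _ _ ((finite_range p).infinite_compl.mono fun x hx => ?_)
  have hQ : (∏ j, (x - p j)) ≠ 0 :=
    prod_ne_zero_iff.2 fun j _ => sub_ne_zero.2 fun h => hx ⟨j, h.symm⟩
  have hderiv := congrFun ((hasDerivAt_pi.2 fun i => (Y i).hasDerivAt x).unique (hY x hx)) i
  have hmap := RingHom.map_mulVec (evalRingHom x) (clearedCoeffMatrix p B) Y i
  simp only [coe_evalRingHom, clearedCoeffMatrix_map_eval p B hx] at hmap
  simp only [mem_ofPred_eq, eval_add, eval_mul, eval_nodal, hderiv, hmap]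
  simp [smul_mulVec, hQ, mul_sub, Function.comp_def]

end ClearedCoeffMatrix

theorem stmt_6_general (N S : ℕ)
    (p : Fin (S + 2) → ℂ)
    (B : Fin (S + 2) → Matrix (Fin N) (Fin N) ℂ)
    (hinv : ∀ k : ℕ,
      (∀ j, IsUnit ((k : ℂ) • (1 : Matrix (Fin N) (Fin N) ℂ) + B j)) ∧
        IsUnit ((k : ℂ) • (1 : Matrix (Fin N) (Fin N) ℂ) + ∑ j, B j))
    (g : Fin N → Polynomial ℂ) (hgdeg : ∀ i, (g i).degree ≤ (S : ℕ))
    (y : ℂ → Fin N → ℂ) (hyent : Differentiable ℂ y)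
    (hy : ∀ x ∈ (Set.univ : Set ℂ) \ Set.range p,
      HasDerivAt y
        ((∏ j, (x - p j))⁻¹ • (fun i => (g i).eval x)
          - (∑ j, (x - p j)⁻¹ • B j) *ᵥ y x) x) :
    (∀ i, g i = 0) ∧ ∀ x, y x = 0 := by
  have hy' (x) (hx : x ∉ Set.range p) := hy x ⟨trivial, hx⟩
  have hcard : Fintype.card (Fin (S + 2)) = S + 1 + 1 := Fintype.card_fin _
  have hg : ∀ i, (g i).degree < (S + 1 : ℕ) :=
    fun i => (hgdeg i).trans_lt (by exact_mod_cast S.lt_succ_self)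
  obtain ⟨C, hC⟩ := exists_eventually_norm_mul_norm_deriv_le
    (fun i => (hg i).trans (by rw [hcard]; exact_mod_cast (S + 1).lt_succ_self)) hy'
  obtain ⟨K, D, hKD⟩ := exists_norm_le_mul_max_one_pow_of_norm_mul_deriv_le hyent hC
  obtain ⟨Y, rfl⟩ := exists_polynomial_pi_eq_of_norm_le hyent hKD
  have hid := nodal_mul_derivative_add_clearedCoeffMatrix_mulVec_eq hy'
  have hQ : (nodal univ p).natDegree = S + 1 + 1 := by rw [natDegree_nodal, card_univ, hcard]
  have hQ1 := (nodal_monic (s := univ) (v := p)).coeff_natDegree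
  rw [hQ] at hQ1
  obtain rfl : Y = 0 := eq_zero_of_mul_derivative_add_mulVec_eq hQ.le hQ1
    (natDegree_clearedCoeffMatrix_le hcard p B) (clearedCoeffMatrix_map_coeff hcard p B) hg hid
    fun k => (hinv k).2
  exact ⟨fun i => by simpa using (hid i).symm, fun x => by ext; simp⟩

/-- Lemma 5 (uniqueness lemma): under condition (INV), if `g` is a polynomial of degree
at most `S` and `y` is a solution of `y' + B(x) y = Q(x)⁻¹ g(x)` which is analytic at
every singular point `p 0, …, p (S+1)` — equivalently, entire — then `g ≡ 0` and `y ≡ 0`. -/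
theorem stmt_6 (N S : ℕ) (hN : 1 ≤ N)
    (p : Fin (S + 2) → ℂ) (hp : Function.Injective p)
    (B : Fin (S + 2) → Matrix (Fin N) (Fin N) ℂ)
    (hinv : ∀ k : ℕ,
      (∀ j, IsUnit ((k : ℂ) • (1 : Matrix (Fin N) (Fin N) ℂ) + B j)) ∧
        IsUnit ((k : ℂ) • (1 : Matrix (Fin N) (Fin N) ℂ) + ∑ j, B j))
    (g : Fin N → Polynomial ℂ) (hgdeg : ∀ i, (g i).degree ≤ (S : ℕ))
    (y : ℂ → Fin N → ℂ) (hyent : Differentiable ℂ y)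
    (hy : ∀ x ∈ (Set.univ : Set ℂ) \ Set.range p,
      HasDerivAt y
        ((∏ j, (x - p j))⁻¹ • (fun i => (g i).eval x)
          - (∑ j, (x - p j)⁻¹ • B j) *ᵥ y x) x) :
    (∀ i, g i = 0) ∧ ∀ x, y x = 0 :=
  stmt_6_general N S p B hinv g hgdeg y hyent hy
end

section
/- Define the linear operators 𝒜_k on matrix-valued functions by (𝒜_k F)(x) = k Q'(x) F(x) + Q(x) B(x) F(x) + Q(x) F'(x). Then for every n ≥ S+1, writing n = (S+1)m + i with 0 ≤ i ≤ S, the function P_n^{(W)} defined by the Rodrigues-type formula satisfies P_n^{(W)}(x) = (𝒜_1 𝒜_2 ⋯ 𝒜_m)(x^i I)(x). As a consequence, each P_n^{(W)} is a matrix-valued polynomial in x. -/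
open Matrix Set

attribute [local instance] Matrix.linftyOpNormedAddCommGroup Matrix.linftyOpNormedSpace
  Matrix.linftyOpNormedRing Matrix.linftyOpNormedAlgebra

/-- The matrix-valued functions `P_n^{(V)}` given by the Rodrigues-type formula
`P_n^{(V)}(x) = V(x)⁻¹ (d/dx)^m [ x^i Q(x)^m V(x) ]`, where `n = (S+1) m + i`,
`0 ≤ i ≤ S`, and `Q(x) = Π (x - pⱼ)`. -/
noncomputable def RodriguesP (N S : ℕ) (p : Fin (S + 2) → ℂ)
    (V : ℂ → Matrix (Fin N) (Fin N) ℂ) (n : ℕ) (x : ℂ) : Matrix (Fin N) (Fin N) ℂ :=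
  (V x)⁻¹ *
    iteratedDeriv (n / (S + 1))
      (fun t => (t ^ (n % (S + 1)) * (∏ j, (t - p j)) ^ (n / (S + 1))) • V t) x

/-- The linear operators `𝒜ₖ F = k Q' F + Q B F + Q F'` on matrix-valued functions. -/
noncomputable def AOp (N S : ℕ) (p : Fin (S + 2) → ℂ)
    (B : Fin (S + 2) → Matrix (Fin N) (Fin N) ℂ) (k : ℕ)
    (F : ℂ → Matrix (Fin N) (Fin N) ℂ) : ℂ → Matrix (Fin N) (Fin N) ℂ :=
  fun x =>
    ((k : ℂ) * deriv (fun t => ∏ j, (t - p j)) x) • F x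
      + (∏ j, (x - p j)) • ((∑ j, (x - p j)⁻¹ • B j) * F x)
      + (∏ j, (x - p j)) • deriv F x

/-!
Write `Q(x) = ∏ⱼ (x - pⱼ)`. Because `W' = W B`, the product rule gives
`(Q^{e+1} W G)' = Q^e W (𝒜_{e+1} G)`, so by induction the `k`-th derivative of
`Q^m W xⁱ` is `Q^{m-k} W 𝒜_{m-k+1} ⋯ 𝒜_m (xⁱ I)`; at `k = m` cancelling `W` gives the formula.
Polynomiality: `Q B = ∑ⱼ (∏_{l ≠ j} (x - pₗ)) Bⱼ` has no poles, so off the poles each `𝒜ₖ`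
maps polynomials with matrix coefficients, evaluated at the central element `x • 1`,
to such polynomials.
-/

namespace Polynomial

section Algebra

variable {R A : Type*} [CommSemiring R] [Semiring A] [Algebra R A]

def scalarEval (y : R) : A[X] →+* A :=
  eval₂RingHom' (RingHom.id A) (algebraMap R A y) fun a => Algebra.commute_algebraMap_right y a

lemma scalarEval_apply (y : R) (P : A[X]) : scalarEval y P = P.eval (algebraMap R A y) := rfl

@[simp]
lemma scalarEval_C (y : R) (a : A) : scalarEval y (C a) = a := eval_C

@[simp]
lemma scalarEval_X_pow (y : R) (i : ℕ) : scalarEval y (X ^ i : A[X]) = y ^ i • 1 := by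
  rw [map_pow, scalarEval_apply, eval_X, ← map_pow, Algebra.algebraMap_eq_smul_one]

@[simp]
lemma scalarEval_map_algebraMap (y : R) (q : R[X]) :
    scalarEval y (q.map (algebraMap R A)) = algebraMap R A (q.eval y) := by
  rw [scalarEval_apply, eval_map, eval₂_at_apply]

lemma scalarEval_monomial (y : R) (n : ℕ) (a : A) : scalarEval y (monomial n a) = y ^ n • a := by
  rw [scalarEval_apply, eval_monomial, ← map_pow, ← Algebra.commutes, ← Algebra.smul_def]

lemma scalarEval_eq_sum_range (y : R) (P : A[X]) :
    scalarEval y P = ∑ k ∈ Finset.range (P.natDegree + 1), y ^ k • P.coeff k := by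
  rw [scalarEval_apply, eval_eq_sum_range]
  refine Finset.sum_congr rfl fun k _ => ?_
  rw [← map_pow, ← Algebra.commutes, ← Algebra.smul_def]

end Algebra

section Calculus

variable {𝕜 A : Type*} [NontriviallyNormedField 𝕜] [NormedRing A] [NormedAlgebra 𝕜 A]

lemma hasDerivAt_scalarEval (P : A[X]) (x : 𝕜) :
    HasDerivAt (fun y => scalarEval y P) (scalarEval x (derivative P)) x := by
  induction P using Polynomial.induction_on' with
  | add P Q hP hQ => simpa only [map_add, derivative_add] using hP.fun_add hQ
  | monomial n a =>
    have hcoeff : a * (n : A) = (n : 𝕜) • a := by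
      rw [← Nat.cast_comm, ← nsmul_eq_mul, Nat.cast_smul_eq_nsmul]
    simp only [scalarEval_monomial, derivative_monomial, hcoeff, smul_smul, mul_comm (x ^ _)]
    exact (hasDerivAt_pow n x).smul_const a

lemma hasDerivAt_of_eqOn_scalarEval {F : 𝕜 → A} {P : A[X]} {V : Set 𝕜} (hV : IsOpen V)
    (hF : Set.EqOn F (fun y => scalarEval y P) V) {x : 𝕜} (hx : x ∈ V) :
    HasDerivAt F (scalarEval x (derivative P)) x :=
  (hasDerivAt_scalarEval P x).congr_of_eventuallyEq
    (Filter.eventuallyEq_of_mem (hV.mem_nhds hx) hF)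

end Calculus

end Polynomial

open Polynomial

lemma Finset.prod_sub_smul_sum_inv_sub_smul {ι 𝕜 E : Type*} [DecidableEq ι] [Field 𝕜]
    [AddCommGroup E] [Module 𝕜 E] {s : Finset ι} {p : ι → 𝕜} {x : 𝕜} (hx : ∀ j ∈ s, x ≠ p j)
    (B : ι → E) :
    (∏ j ∈ s, (x - p j)) • ∑ j ∈ s, (x - p j)⁻¹ • B j
      = ∑ j ∈ s, (∏ l ∈ s.erase j, (x - p l)) • B j := by
  rw [Finset.smul_sum]
  refine Finset.sum_congr rfl fun j hj => ?_
  rw [smul_smul, ← Finset.mul_prod_erase s _ hj, mul_comm (x - p j), mul_assoc,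
    mul_inv_cancel₀ (sub_ne_zero.mpr (hx j hj)), mul_one]

lemma HasDerivAt.pow_smul_mul {𝕜 A : Type*} [NontriviallyNormedField 𝕜] [NormedRing A]
    [NormedAlgebra 𝕜 A] {q : 𝕜 → 𝕜} {W G : 𝕜 → A} {q' : 𝕜} {b G' : A} {x : 𝕜} (e : ℕ)
    (hq : HasDerivAt q q' x) (hW : HasDerivAt W (W x * b) x) (hG : HasDerivAt G G' x) :
    HasDerivAt (fun t => q t ^ (e + 1) • (W t * G t))
      (q x ^ e • (W x * ((((e + 1 : ℕ) : 𝕜) * q') • G x + q x • (b * G x) + q x • G'))) x := by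
  refine ((hq.fun_pow (e + 1)).fun_smul (hW.fun_mul hG)).congr_deriv ?_
  rw [Nat.add_sub_cancel]
  simp only [mul_add, smul_add, mul_smul_comm, ← mul_assoc]
  match_scalars <;> ring

open Lagrange

section Rodrigues

variable {N S : ℕ} (p : Fin (S + 2) → ℂ) (B : Fin (S + 2) → Matrix (Fin N) (Fin N) ℂ)

noncomputable def aOpPoly (k : ℕ) (P : (Matrix (Fin N) (Fin N) ℂ)[X]) :
    (Matrix (Fin N) (Fin N) ℂ)[X] :=
  ((k : ℂ[X]) * derivative (nodal Finset.univ p)).map (algebraMap ℂ _) * P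
    + ∑ j, (nodal (Finset.univ.erase j) p).map (algebraMap ℂ _) * C (B j) * P
    + (nodal Finset.univ p).map (algebraMap ℂ _) * derivative P

lemma eqOn_AOp_scalarEval {F : ℂ → Matrix (Fin N) (Fin N) ℂ} {P : (Matrix (Fin N) (Fin N) ℂ)[X]}
    (k : ℕ) (hF : EqOn F (fun x => scalarEval x P) (range p)ᶜ) :
    EqOn (AOp N S p B k F) (fun x => scalarEval x (aOpPoly p B k P)) (range p)ᶜ := by
  intro x hx
  have hpoles : ∀ j ∈ Finset.univ, x ≠ p j := fun j _ h => hx ⟨j, h.symm⟩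
  have hQ : (fun t => ∏ j, (t - p j)) = fun t => (nodal Finset.univ p).eval t :=
    funext fun t => eval_nodal.symm
  have hF' : deriv F x = scalarEval x (derivative P) :=
    (hasDerivAt_of_eqOn_scalarEval (finite_range p).isClosed.isOpen_compl hF hx).deriv
  rw [AOp, hQ, Polynomial.deriv, hF', hF hx, ← smul_mul_assoc,
    Finset.prod_sub_smul_sum_inv_sub_smul hpoles]
  simp only [aOpPoly, map_add, map_mul, map_sum, scalarEval_map_algebraMap, scalarEval_C,
    ← Algebra.smul_def, eval_mul, eval_natCast, eval_nodal, Finset.sum_mul, smul_mul_assoc,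
    mul_smul]

lemma eqOn_foldr_AOp_scalarEval {F₀ : ℂ → Matrix (Fin N) (Fin N) ℂ}
    {P₀ : (Matrix (Fin N) (Fin N) ℂ)[X]} (hF₀ : EqOn F₀ (fun x => scalarEval x P₀) (range p)ᶜ)
    (l : List ℕ) :
    EqOn (l.foldr (AOp N S p B) F₀) (fun x => scalarEval x (l.foldr (aOpPoly p B) P₀))
      (range p)ᶜ := by
  induction l with
  | nil => exact hF₀
  | cons k l ih => exact eqOn_AOp_scalarEval p B k ih

lemma iteratedDeriv_pow_smul_mul_eq_foldr_AOp {U : Set ℂ} (hU : IsOpen U)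
    (hUp : U ⊆ (range p)ᶜ) {W : ℂ → Matrix (Fin N) (Fin N) ℂ}
    (hWd : ∀ x ∈ U, HasDerivAt W (W x * (∑ j, (x - p j)⁻¹ • B j)) x)
    {F₀ : ℂ → Matrix (Fin N) (Fin N) ℂ} {P₀ : (Matrix (Fin N) (Fin N) ℂ)[X]}
    (hF₀ : EqOn F₀ (fun x => scalarEval x P₀) (range p)ᶜ) (k : ℕ) :
    ∀ e, ∀ x ∈ U, iteratedDeriv k (fun t => (∏ j, (t - p j)) ^ (e + k) • (W t * F₀ t)) x
      = (∏ j, (x - p j)) ^ e • (W x * (List.range' (e + 1) k).foldr (AOp N S p B) F₀ x) := by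
  induction k with
  | zero => intro e x _; simp
  | succ k ih =>
    intro e x hx
    have hQ : DifferentiableAt ℂ (fun t => ∏ j, (t - p j)) x := by fun_prop
    have hG := (hasDerivAt_of_eqOn_scalarEval (finite_range p).isClosed.isOpen_compl
      (eqOn_foldr_AOp_scalarEval p B hF₀ (List.range' (e + 2) k)) (hUp hx)).differentiableAt
    have hstep := hQ.hasDerivAt.pow_smul_mul e (hWd x hx) hG.hasDerivAt
    have hprev : iteratedDeriv k (fun t => (∏ j, (t - p j)) ^ (e + 1 + k) • (W t * F₀ t))
        =ᶠ[nhds x] fun y => (∏ j, (y - p j)) ^ (e + 1) •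
          (W y * (List.range' (e + 2) k).foldr (AOp N S p B) F₀ y) :=
      Filter.eventuallyEq_of_mem (hU.mem_nhds hx) (ih (e + 1))
    rw [iteratedDeriv_succ, show e + (k + 1) = e + 1 + k by omega, hprev.deriv_eq, hstep.deriv,
      List.range'_succ, List.foldr_cons]
    rfl

end Rodrigues

theorem stmt_8_general (N S : ℕ)
    (p : Fin (S + 2) → ℂ)
    (B : Fin (S + 2) → Matrix (Fin N) (Fin N) ℂ)
    (U : Set ℂ) (hU : IsOpen U)
    (hUp : ∀ j, p j ∉ U)
    (W : ℂ → Matrix (Fin N) (Fin N) ℂ)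
    (hWd : ∀ x ∈ U, HasDerivAt W (W x * (∑ j, (x - p j)⁻¹ • B j)) x)
    (hWi : ∀ x ∈ U, IsUnit (W x))
    (n : ℕ) :
    (∀ x ∈ U,
      RodriguesP N S p W n x =
        (((List.range (n / (S + 1))).map fun k => k + 1).foldr (AOp N S p B)
          (fun t => (t ^ (n % (S + 1)) : ℂ) • (1 : Matrix (Fin N) (Fin N) ℂ))) x)
    ∧ ∃ (dg : ℕ) (c : ℕ → Matrix (Fin N) (Fin N) ℂ),
        ∀ x ∈ U, RodriguesP N S p W n x = ∑ k ∈ Finset.range (dg + 1), x ^ k • c k := by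
  set m := n / (S + 1)
  set i := n % (S + 1)
  have hUpoles : U ⊆ (range p)ᶜ := fun x hx ⟨j, hj⟩ => hUp j (hj ▸ hx)
  have hmono : EqOn (fun t : ℂ => t ^ i • (1 : Matrix (Fin N) (Fin N) ℂ))
      (fun x => scalarEval x (X ^ i)) (range p)ᶜ :=
    fun x _ => (scalarEval_X_pow x i).symm
  have hlist : (List.range m).map (fun k => k + 1) = List.range' 1 m := by
    simp only [List.range'_eq_map_range, add_comm]
  have hrod : ∀ x ∈ U, RodriguesP N S p W n x =
      ((List.range m).map fun k => k + 1).foldr (AOp N S p B) (fun t => t ^ i • 1) x := by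
    intro x hx
    have hfun : (fun t => (t ^ i * (∏ j, (t - p j)) ^ m) • W t)
        = fun t => (∏ j, (t - p j)) ^ (0 + m) • (W t * t ^ i • 1) := by
      funext t
      rw [zero_add, Matrix.mul_smul, Matrix.mul_one, mul_comm, mul_smul]
    rw [RodriguesP, hfun, iteratedDeriv_pow_smul_mul_eq_foldr_AOp p B hU hUpoles hWd hmono m 0 x hx,
      pow_zero, one_smul, Matrix.nonsing_inv_mul_cancel_left _ _
        ((Matrix.isUnit_iff_isUnit_det _).mp (hWi x hx)), hlist]
  have hpoly := eqOn_foldr_AOp_scalarEval p B hmono ((List.range m).map fun k => k + 1)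
  exact ⟨hrod, _, _, fun x hx =>
    (hrod x hx).trans ((hpoly (hUpoles hx)).trans (scalarEval_eq_sum_range _ _))⟩

/-- Proposition 1: for `n = (S+1)m + i ≥ S+1` (with `0 ≤ i ≤ S`) the Rodrigues-type
formula satisfies `P_n^{(W)} = 𝒜₁ 𝒜₂ ⋯ 𝒜ₘ (xⁱ I)`; as a consequence each `P_n^{(W)}`
is a matrix-valued polynomial in `x`. Here `W` is an integrating factor: an
invertible-matrix-valued analytic solution of `W' = W B` on a simply connected
domain `U` avoiding the singularities. -/
theorem stmt_8 (N S : ℕ) (hN : 1 ≤ N)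
    (p : Fin (S + 2) → ℂ) (hp : Function.Injective p)
    (B : Fin (S + 2) → Matrix (Fin N) (Fin N) ℂ)
    (U : Set ℂ) (hU : IsOpen U) (hUc : IsPreconnected U) (hUne : U.Nonempty)
    (hUsc : SimplyConnectedSpace U) (hUp : ∀ j, p j ∉ U)
    (W : ℂ → Matrix (Fin N) (Fin N) ℂ)
    (hWa : AnalyticOnNhd ℂ W U)
    (hWd : ∀ x ∈ U, HasDerivAt W (W x * (∑ j, (x - p j)⁻¹ • B j)) x)
    (hWi : ∀ x ∈ U, IsUnit (W x))
    (n : ℕ) (hn : S + 1 ≤ n) :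
    (∀ x ∈ U,
      RodriguesP N S p W n x =
        (((List.range (n / (S + 1))).map fun k => k + 1).foldr (AOp N S p B)
          (fun t => (t ^ (n % (S + 1)) : ℂ) • (1 : Matrix (Fin N) (Fin N) ℂ))) x)
    ∧ ∃ (dg : ℕ) (c : ℕ → Matrix (Fin N) (Fin N) ℂ),
        ∀ x ∈ U, RodriguesP N S p W n x = ∑ k ∈ Finset.range (dg + 1), x ^ k • c k :=
  stmt_8_general N S p B U hU hUp W hWd hWi n
end

section
/- Assume condition (INV). Then for every polynomial g ∈ ℂ^N[x] there exist a unique polynomial φ ∈ ℂ^N[x] of degree at most S and a unique polynomial y ∈ ℂ^N[x] such that y'(x) + B(x) y(x) = Q(x)^{−1} [g(x) − φ(x)]; moreover, if deg g ≥ S+1 then deg y = deg g − (S+1), and if deg g ≤ S then y ≡ 0 and φ = g. -/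
/-!
Multiplying the system through by `Q` turns it into the polynomial equation `φ + L y = g` with
`L y = Q y' + A y`, `A = Σⱼ (Q / (x - pⱼ)) Bⱼ`. If `y` has degree `d`, then
`L y` has degree at most `d + S + 1` and its coefficient there is `(d + B_∞)` applied to the top
coefficient of `y`. Since these matrices are invertible, `L` raises degrees by exactly `S + 1`,
so a division with remainder by `L` yields `(φ, y)`, and comparing top coefficients gives
uniqueness and `deg y = deg g - (S + 1)`.
-/

open Matrix Set

open Polynomial Finset

namespace FuchsianSystem

section LeadingSymbol

variable {R ι : Type*} [CommRing R] [Fintype ι]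

def supNatDegree (y : ι → R[X]) : ℕ := univ.sup fun i => (y i).natDegree

lemma natDegree_le_supNatDegree (y : ι → R[X]) (i : ι) : (y i).natDegree ≤ supNatDegree y :=
  le_sup (f := fun i => (y i).natDegree) (mem_univ i)

lemma supNatDegree_zero : supNatDegree (0 : ι → R[X]) = 0 := by
  simp [supNatDegree]

lemma coeff_supNatDegree_ne_zero {y : ι → R[X]} (hy : y ≠ 0) :
    (fun i => (y i).coeff (supNatDegree y)) ≠ 0 := by
  obtain ⟨i₀, -⟩ := Function.ne_iff.mp hy
  obtain ⟨i, -, hi⟩ := exists_mem_eq_sup univ ⟨i₀, mem_univ i₀⟩ fun i => (y i).natDegree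
  intro h
  have hyi : y i = 0 := leadingCoeff_eq_zero.mp (by
    rw [leadingCoeff, ← hi]
    exact congrFun h i)
  have hD : supNatDegree y = 0 := by rw [supNatDegree, hi, hyi, natDegree_zero]
  refine hy (funext fun j => ?_)
  have hj := congrFun h j
  rw [hD] at hj
  rw [eq_C_of_natDegree_le_zero (p := y j) (hD ▸ natDegree_le_supNatDegree y j), hj,
    Pi.zero_apply, C_0]
  rfl

lemma natDegree_sub_le_of_coeff_eq {f g : R[X]} {D : ℕ} (hf : f.natDegree ≤ D + 1)
    (hg : g.natDegree ≤ D + 1) (h : f.coeff (D + 1) = g.coeff (D + 1)) :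
    (f - g).natDegree ≤ D := by
  rw [natDegree_le_iff_coeff_eq_zero]
  intro k hk
  rw [coeff_sub, sub_eq_zero]
  rcases (Nat.succ_le_of_lt hk).eq_or_lt with rfl | hk
  · exact h
  · rw [coeff_eq_zero_of_natDegree_lt (hf.trans_lt hk),
      coeff_eq_zero_of_natDegree_lt (hg.trans_lt hk)]

def HasLeadingSymbol (L : (ι → R[X]) →+ (ι → R[X])) (m : ℕ) (M : ℕ → Matrix ι ι R) : Prop :=
  ∀ d y, (∀ i, (y i).natDegree ≤ d) →
    (∀ i, (L y i).natDegree ≤ d + m) ∧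
      (fun i => (L y i).coeff (d + m)) = M d *ᵥ fun i => (y i).coeff d

variable [DecidableEq ι] {L : (ι → R[X]) →+ (ι → R[X])} {n : ℕ} {M : ℕ → Matrix ι ι R}

theorem exists_add_eq (hL : HasLeadingSymbol L (n + 1) M) (hM : ∀ d, IsUnit (M d))
    (g : ι → R[X]) : ∃ φ y, (∀ i, (φ i).natDegree ≤ n) ∧ φ + L y = g := by
  suffices ∀ D (g : ι → R[X]), (∀ i, (g i).natDegree ≤ D) →
      ∃ φ y, (∀ i, (φ i).natDegree ≤ n) ∧ φ + L y = g from
    this _ g (natDegree_le_supNatDegree g)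
  intro D
  induction D using Nat.strong_induction_on with
  | _ D ih =>
  intro g hg
  by_cases hD : D ≤ n
  · exact ⟨g, 0, fun i => (hg i).trans hD, by rw [map_zero, add_zero]⟩
  obtain ⟨d, rfl⟩ : ∃ d, D = d + (n + 1) := ⟨D - (n + 1), by omega⟩
  -- peel off the top coefficient of `g` with a monomial `y₁` of degree `d`
  obtain ⟨c, hc⟩ := mulVec_surjective_iff_isUnit.mpr (hM d) fun i => (g i).coeff (d + (n + 1))
  set y₁ : ι → R[X] := fun i => monomial d (c i)
  obtain ⟨hdeg, hcoeff⟩ := hL d y₁ fun i => natDegree_monomial_le _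
  have hy₁ : (fun i => (y₁ i).coeff d) = c := by simp [y₁]
  have hlower : ∀ i, ((g - L y₁) i).natDegree ≤ d + n := fun i =>
    natDegree_sub_le_of_coeff_eq (hg i) (hdeg i)
      (congrFun (hc.symm.trans (hy₁ ▸ hcoeff).symm) i)
  obtain ⟨φ, y₂, hφ, h⟩ := ih (d + n) (by omega) (g - L y₁) hlower
  exact ⟨φ, y₂ + y₁, hφ, by rw [map_add, ← add_assoc, h, sub_add_cancel]⟩

theorem supNatDegree_eq_of_add_eq (hL : HasLeadingSymbol L (n + 1) M) (hM : ∀ d, IsUnit (M d))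
    {φ y g : ι → R[X]} (hφ : ∀ i, (φ i).natDegree ≤ n) (h : φ + L y = g) (hy : y ≠ 0) :
    supNatDegree g = supNatDegree y + (n + 1) := by
  set d := supNatDegree y
  obtain ⟨hdeg, hcoeff⟩ := hL d y (natDegree_le_supNatDegree y)
  refine le_antisymm (Finset.sup_le fun i _ => ?_) ?_
  · rw [← h]
    exact (natDegree_add_le _ _).trans (max_le (by linarith [hφ i]) (hdeg i))
  · have htop : (fun i => (g i).coeff (d + (n + 1))) = M d *ᵥ fun i => (y i).coeff d := by
      rw [← hcoeff, ← h]
      funext i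
      rw [Pi.add_apply, coeff_add, coeff_eq_zero_of_natDegree_lt (by linarith [hφ i]), zero_add]
    have hne : (fun i => (g i).coeff (d + (n + 1))) ≠ 0 := by
      rw [htop, ← mulVec_zero (M d)]
      exact (mulVec_injective_of_isUnit (hM d)).ne (coeff_supNatDegree_ne_zero hy)
    obtain ⟨i, hi⟩ := Function.ne_iff.mp hne
    exact (le_natDegree_of_ne_zero hi).trans (natDegree_le_supNatDegree g i)

theorem eq_zero_of_add_eq_of_supNatDegree_le (hL : HasLeadingSymbol L (n + 1) M)
    (hM : ∀ d, IsUnit (M d)) {φ y g : ι → R[X]} (hφ : ∀ i, (φ i).natDegree ≤ n)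
    (h : φ + L y = g) (hg : supNatDegree g ≤ n) : y = 0 ∧ φ = g := by
  have hy : y = 0 := by
    by_contra hy
    have := supNatDegree_eq_of_add_eq hL hM hφ h hy
    omega
  refine ⟨hy, ?_⟩
  rwa [hy, map_zero, add_zero] at h

theorem supNatDegree_eq_sub_of_add_eq (hL : HasLeadingSymbol L (n + 1) M)
    (hM : ∀ d, IsUnit (M d)) {φ y g : ι → R[X]} (hφ : ∀ i, (φ i).natDegree ≤ n)
    (h : φ + L y = g) (hg : n + 1 ≤ supNatDegree g) :
    supNatDegree y = supNatDegree g - (n + 1) := by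
  have hy : y ≠ 0 := by
    rintro rfl
    rw [map_zero, add_zero] at h
    have : supNatDegree g ≤ n := Finset.sup_le fun i _ => h ▸ hφ i
    omega
  have := supNatDegree_eq_of_add_eq hL hM hφ h hy
  omega

theorem add_eq_unique (hL : HasLeadingSymbol L (n + 1) M) (hM : ∀ d, IsUnit (M d))
    {φ y φ' y' g : ι → R[X]} (hφ : ∀ i, (φ i).natDegree ≤ n) (hφ' : ∀ i, (φ' i).natDegree ≤ n)
    (h : φ + L y = g) (h' : φ' + L y' = g) : φ = φ' ∧ y = y' := by
  have hdiff : (φ - φ') + L (y - y') = 0 := by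
    rw [map_sub, ← sub_eq_zero.mpr (h.trans h'.symm)]
    abel
  obtain ⟨hy, hφ⟩ := eq_zero_of_add_eq_of_supNatDegree_le hL hM
    (fun i => (natDegree_sub_le _ _).trans (max_le (hφ i) (hφ' i))) hdiff
    (supNatDegree_zero.trans_le n.zero_le)
  exact ⟨sub_eq_zero.mp hφ, sub_eq_zero.mp hy⟩

end LeadingSymbol

section Operator

variable {R ι : Type*} [CommRing R] [Fintype ι] {S : ℕ}

lemma coeff_mulVec_map_C (M : Matrix ι ι R) (y : ι → R[X]) (d : ℕ) :
    (fun i => ((M.map C *ᵥ y) i).coeff d) = M *ᵥ fun i => (y i).coeff d := by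
  funext i
  simp [mulVec, dotProduct, finsetSum_coeff, coeff_C_mul]

lemma natDegree_mulVec_map_C_le (M : Matrix ι ι R) {y : ι → R[X]} {d : ℕ}
    (hy : ∀ i, (y i).natDegree ≤ d) (i : ι) : ((M.map C *ᵥ y) i).natDegree ≤ d :=
  natDegree_sum_le_of_forall_le _ _ fun l _ => (natDegree_C_mul_le _ _).trans (hy l)

lemma eval_mulVec_map_C (M : Matrix ι ι R) (y : ι → R[X]) (x : R) :
    (fun i => ((M.map C *ᵥ y) i).eval x) = M *ᵥ fun i => (y i).eval x := by
  funext i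
  simp [mulVec, dotProduct, eval_finsetSum]

lemma natDegree_mul_derivative_le {q f : R[X]} {m d : ℕ} (hq : q.natDegree = m + 1)
    (hf : f.natDegree ≤ d) : (q * derivative f).natDegree ≤ d + m := by
  rcases d with _ | e
  · simp [derivative_of_natDegree_zero (Nat.le_zero.mp hf)]
  · have hf' : (derivative f).natDegree ≤ e := (natDegree_derivative_le f).trans (by omega)
    exact (natDegree_mul_le_of_le hq.le hf').trans (by omega)

lemma coeff_mul_derivative {q f : R[X]} {m d : ℕ} (hq : q.Monic) (hqm : q.natDegree = m + 1)
    (hf : f.natDegree ≤ d) : (q * derivative f).coeff (d + m) = d * f.coeff d := by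
  rcases d with _ | e
  · rw [derivative_of_natDegree_zero (Nat.le_zero.mp hf), mul_zero, coeff_zero]
    simp
  · have hf' : (derivative f).natDegree ≤ e := (natDegree_derivative_le f).trans (by omega)
    rw [show e + 1 + m = (m + 1) + e by ring, coeff_mul_add_eq_of_natDegree_le hqm.le hf',
      ← hqm, hq.coeff_natDegree, one_mul, coeff_derivative]
    push_cast
    ring

lemma coeff_mul_add_natDegree_of_monic {q f : R[X]} {d : ℕ} (hq : q.Monic) (hf : f.natDegree ≤ d) :
    (q * f).coeff (d + q.natDegree) = f.coeff d := by
  rw [add_comm, coeff_mul_add_eq_of_natDegree_le le_rfl hf, hq.coeff_natDegree, one_mul]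

/-- The system `y' + B(x) y` multiplied through by `Q(x) = ∏ (x - p j)`. -/
noncomputable def clearedOperator (p : Fin (S + 2) → R) (B : Fin (S + 2) → Matrix ι ι R) :
    (ι → R[X]) →+ (ι → R[X]) :=
  AddMonoidHom.mk'
    (fun y i => (∏ j, (X - C (p j))) * derivative (y i) +
      ∑ j, (∏ k ∈ univ.erase j, (X - C (p k))) * ((B j).map C *ᵥ y) i)
    fun y z => by
      funext i
      simp only [Pi.add_apply, derivative_add, mulVec_add, mul_add, sum_add_distrib]
      abel

theorem hasLeadingSymbol_clearedOperator [Nontrivial R] [DecidableEq ι] (p : Fin (S + 2) → R)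
    (B : Fin (S + 2) → Matrix ι ι R) :
    HasLeadingSymbol (clearedOperator p B) (S + 1) fun d => (d : R) • 1 + ∑ j, B j := by
  intro d y hy
  have hQ : (∏ j, (X - C (p j))).natDegree = (S + 1) + 1 := by simp
  have hQj : ∀ j, (∏ k ∈ univ.erase j, (X - C (p k))).natDegree = S + 1 := by simp
  constructor
  · intro i
    refine natDegree_add_le_of_degree_le (natDegree_mul_derivative_le hQ (hy i))
      (natDegree_sum_le_of_forall_le _ _ fun j _ => ?_)
    exact natDegree_mul_le_of_le (hQj j).le (natDegree_mulVec_map_C_le _ hy i) |>.trans (by omega)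
  · funext i
    simp only [clearedOperator, AddMonoidHom.mk'_apply, coeff_add, finsetSum_coeff]
    rw [coeff_mul_derivative (monic_prod_X_sub_C _ _) hQ (hy i)]
    have hterm : ∀ j, ((∏ k ∈ univ.erase j, (X - C (p k))) * ((B j).map C *ᵥ y) i).coeff
        (d + (S + 1)) = (B j *ᵥ fun i => (y i).coeff d) i := by
      intro j
      rw [← hQj j, coeff_mul_add_natDegree_of_monic (monic_prod_X_sub_C _ _)
        (natDegree_mulVec_map_C_le _ hy i)]
      exact congrFun (coeff_mulVec_map_C _ _ _) i
    simp only [hterm, add_mulVec, smul_mulVec, one_mulVec, sum_mulVec, Pi.add_apply, Pi.smul_apply,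
      smul_eq_mul, Finset.sum_apply]

end Operator

section Evaluation

variable {K ι : Type*} [Field K] [Fintype ι] {S : ℕ}

def SolvesAt (p : Fin (S + 2) → K) (B : Fin (S + 2) → Matrix ι ι K) (g φ y : ι → K[X]) (x : K) :
    Prop :=
  (fun i => (y i).derivative.eval x) + (∑ j, (x - p j)⁻¹ • B j) *ᵥ (fun i => (y i).eval x)
    = (∏ j, (x - p j))⁻¹ • ((fun i => (g i).eval x) - fun i => (φ i).eval x)

variable {p : Fin (S + 2) → K} {x : K}

lemma prod_erase_sub_eq_mul_inv (hx : x ∉ Set.range p) (j : Fin (S + 2)) :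
    ∏ k ∈ univ.erase j, (x - p k) = (∏ k, (x - p k)) * (x - p j)⁻¹ := by
  rw [eq_mul_inv_iff_mul_eq₀ (sub_ne_zero.mpr fun h => hx ⟨j, h.symm⟩), mul_comm,
    mul_prod_erase univ (fun k => x - p k) (mem_univ j)]

lemma prod_sub_ne_zero (hx : x ∉ Set.range p) : ∏ k, (x - p k) ≠ 0 :=
  prod_ne_zero_iff.mpr fun j _ => sub_ne_zero.mpr fun h => hx ⟨j, h.symm⟩

lemma eval_clearedOperator (B : Fin (S + 2) → Matrix ι ι K) (hx : x ∉ Set.range p)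
    (y : ι → K[X]) :
    (fun i => (clearedOperator p B y i).eval x) = (∏ j, (x - p j)) •
      ((fun i => (y i).derivative.eval x) + (∑ j, (x - p j)⁻¹ • B j) *ᵥ fun i => (y i).eval x) := by
  funext i
  have hB := fun j => congrFun (eval_mulVec_map_C (B j) y x) i
  simp only [clearedOperator, AddMonoidHom.mk'_apply, eval_add, eval_mul, eval_prod, eval_sub,
    eval_X, eval_C, eval_finsetSum, hB, prod_erase_sub_eq_mul_inv hx, sum_mulVec, smul_mulVec,
    Pi.add_apply, Pi.smul_apply, Finset.sum_apply, smul_eq_mul, mul_add, Finset.mul_sum, mul_assoc]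

lemma solvesAt_iff (B : Fin (S + 2) → Matrix ι ι K) (hx : x ∉ Set.range p) (g φ y : ι → K[X]) :
    SolvesAt p B g φ y x ↔
      (fun i => (φ i + clearedOperator p B y i).eval x) = fun i => (g i).eval x := by
  rw [SolvesAt, eq_inv_smul_iff₀ (prod_sub_ne_zero hx), ← eval_clearedOperator B hx,
    eq_sub_iff_add_eq']
  simp only [eval_add]
  rfl

theorem forall_solvesAt_iff [Infinite K] (B : Fin (S + 2) → Matrix ι ι K) (g φ y : ι → K[X]) :
    (∀ x ∉ Set.range p, SolvesAt p B g φ y x) ↔ φ + clearedOperator p B y = g := by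
  refine ⟨fun h => funext fun i => ?_, fun h x hx => ?_⟩
  · refine eq_of_infinite_eval_eq _ _ ((Set.finite_range p).infinite_compl.mono fun x hx => ?_)
    exact congrFun ((solvesAt_iff B hx g φ y).mp (h x hx)) i
  · rw [solvesAt_iff B hx, ← h]
    rfl

end Evaluation

end FuchsianSystem

open FuchsianSystem in
theorem stmt_11_general (N S : ℕ)
    (p : Fin (S + 2) → ℂ)
    (B : Fin (S + 2) → Matrix (Fin N) (Fin N) ℂ)
    (hinv : ∀ k : ℕ,
      (∀ j, IsUnit ((k : ℂ) • (1 : Matrix (Fin N) (Fin N) ℂ) + B j)) ∧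
        IsUnit ((k : ℂ) • (1 : Matrix (Fin N) (Fin N) ℂ) + ∑ j, B j))
    (g : Fin N → Polynomial ℂ) :
    (∃! φy : (Fin N → Polynomial ℂ) × (Fin N → Polynomial ℂ),
      (∀ i, (φy.1 i).degree ≤ (S : ℕ)) ∧
        ∀ x : ℂ, x ∉ Set.range p →
          (fun i => (φy.2 i).derivative.eval x)
              + (∑ j, (x - p j)⁻¹ • B j) *ᵥ (fun i => (φy.2 i).eval x)
            = (∏ j, (x - p j))⁻¹ •
                ((fun i => (g i).eval x) - fun i => (φy.1 i).eval x))
    ∧ ∀ φ y : Fin N → Polynomial ℂ,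
        (∀ i, (φ i).degree ≤ (S : ℕ)) →
        (∀ x : ℂ, x ∉ Set.range p →
          (fun i => (y i).derivative.eval x)
              + (∑ j, (x - p j)⁻¹ • B j) *ᵥ (fun i => (y i).eval x)
            = (∏ j, (x - p j))⁻¹ •
                ((fun i => (g i).eval x) - fun i => (φ i).eval x)) →
        ((S + 1 ≤ Finset.univ.sup (fun i => (g i).natDegree) →
            Finset.univ.sup (fun i => (y i).natDegree)
              = Finset.univ.sup (fun i => (g i).natDegree) - (S + 1))
          ∧ (Finset.univ.sup (fun i => (g i).natDegree) ≤ S →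
              (∀ i, y i = 0) ∧ φ = g)) := by
  have hL := hasLeadingSymbol_clearedOperator p B
  have hM : ∀ d : ℕ, IsUnit ((d : ℂ) • (1 : Matrix (Fin N) (Fin N) ℂ) + ∑ j, B j) :=
    fun d => (hinv d).2
  have hdeg : ∀ φ : Fin N → ℂ[X], (∀ i, (φ i).degree ≤ (S : ℕ)) ↔ ∀ i, (φ i).natDegree ≤ S :=
    fun φ => forall_congr' fun i => natDegree_le_iff_degree_le.symm
  refine ⟨?_, fun φ y hφ hsol => ?_⟩
  · obtain ⟨φ, y, hφ, h⟩ := exists_add_eq hL hM g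
    refine ⟨(φ, y), ⟨(hdeg φ).mpr hφ, (forall_solvesAt_iff B g φ y).mpr h⟩, ?_⟩
    rintro ⟨φ', y'⟩ ⟨hφ', hsol'⟩
    obtain ⟨rfl, rfl⟩ := add_eq_unique hL hM ((hdeg φ').mp hφ') hφ
      ((forall_solvesAt_iff B g φ' y').mp hsol') h
    rfl
  · have h := (forall_solvesAt_iff B g φ y).mp hsol
    exact ⟨supNatDegree_eq_sub_of_add_eq hL hM ((hdeg φ).mp hφ) h,
      fun hg => (eq_zero_of_add_eq_of_supNatDegree_le hL hM ((hdeg φ).mp hφ) h hg).imp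
        funext_iff.mp id⟩

/-- §4.3.2 of the paper: under condition (INV), for every polynomial `g ∈ ℂᴺ[x]`
there is a unique pair `(φ, y)` of polynomials with `deg φ ≤ S` such that
`y' + B(x) y = Q(x)⁻¹ (g(x) − φ(x))`; moreover for any such pair, if
`deg g ≥ S+1` then `deg y = deg g − (S+1)`, and if `deg g ≤ S` then `y ≡ 0` and `φ = g`. -/
theorem stmt_11 (N S : ℕ) (hN : 1 ≤ N)
    (p : Fin (S + 2) → ℂ) (hp : Function.Injective p)
    (B : Fin (S + 2) → Matrix (Fin N) (Fin N) ℂ)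
    (hinv : ∀ k : ℕ,
      (∀ j, IsUnit ((k : ℂ) • (1 : Matrix (Fin N) (Fin N) ℂ) + B j)) ∧
        IsUnit ((k : ℂ) • (1 : Matrix (Fin N) (Fin N) ℂ) + ∑ j, B j))
    (g : Fin N → Polynomial ℂ) :
    (∃! φy : (Fin N → Polynomial ℂ) × (Fin N → Polynomial ℂ),
      (∀ i, (φy.1 i).degree ≤ (S : ℕ)) ∧
        ∀ x : ℂ, x ∉ Set.range p →
          (fun i => (φy.2 i).derivative.eval x)
              + (∑ j, (x - p j)⁻¹ • B j) *ᵥ (fun i => (φy.2 i).eval x)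
            = (∏ j, (x - p j))⁻¹ •
                ((fun i => (g i).eval x) - fun i => (φy.1 i).eval x))
    ∧ ∀ φ y : Fin N → Polynomial ℂ,
        (∀ i, (φ i).degree ≤ (S : ℕ)) →
        (∀ x : ℂ, x ∉ Set.range p →
          (fun i => (y i).derivative.eval x)
              + (∑ j, (x - p j)⁻¹ • B j) *ᵥ (fun i => (y i).eval x)
            = (∏ j, (x - p j))⁻¹ •
                ((fun i => (g i).eval x) - fun i => (φ i).eval x)) →
        ((S + 1 ≤ Finset.univ.sup (fun i => (g i).natDegree) →
            Finset.univ.sup (fun i => (y i).natDegree)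
              = Finset.univ.sup (fun i => (g i).natDegree) - (S + 1))
          ∧ (Finset.univ.sup (fun i => (g i).natDegree) ≤ S →
              (∀ i, y i = 0) ∧ φ = g)) :=
  stmt_11_general N S p B hinv g
end

section
/- Let W̃ = Q^{−1} W, which is an integrating factor for B̃(x) = B(x) − (Q'(x)/Q(x)) I (a Fuchsian matrix with residues B̃_j = B_j − I and B̃_∞ = B_∞ − (S+2)I). Then for every n ∈ ℕ, writing n = (S+1)m + i with 0 ≤ i ≤ S, one has P_{n+S+1}^{(W̃)}(x) = Q(x) W(x)^{−1} (d/dx)^{m+1} [ x^i Q(x)^m W(x) ], and consequently for every constant vector c ∈ ℂ^N the function y(x) = P_n^{(W)}(x) c is a solution of y'(x) + B(x) y(x) = Q(x)^{−1} P_{n+S+1}^{(W̃)}(x) c. -/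
/-! Writing `n = (S+1)m + i`, the exponent `m` grows by one when `n` grows by `S+1`, and the extra
factor `Q` in `Q^{m+1}` cancels the `Q⁻¹` of `W̃ = Q⁻¹ W`; this gives the formula for
`P_{n+S+1}^{(W̃)}`. The differential equation for `P_n^{(W)} c` is then the product rule for
`W⁻¹ · (d/dx)^m [xⁱ Q^m W]`, since `W' = W B` forces `(W⁻¹)' = -B W⁻¹`. -/

open Matrix Set

attribute [local instance] Matrix.linftyOpNormedAddCommGroup Matrix.linftyOpNormedSpace
  Matrix.linftyOpNormedRing Matrix.linftyOpNormedAlgebra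

section IntegratingFactor

variable {𝕜 R : Type*} [NontriviallyNormedField 𝕜] [NormedRing R] [NormedAlgebra 𝕜 R]
  {W : 𝕜 → R} {A : R} {x : 𝕜}

theorem HasDerivAt.inv_smul_of_eq_mul {q : 𝕜 → 𝕜} {q' : 𝕜} (hq : HasDerivAt q q' x)
    (hqx : q x ≠ 0) (hW : HasDerivAt W (W x * A) x) :
    HasDerivAt (fun t => (q t)⁻¹ • W t) (((q x)⁻¹ • W x) * (A - (q' / q x) • 1)) x := by
  refine ((hq.inv hqx).smul hW).congr_deriv ?_
  rw [smul_mul_assoc, mul_sub, mul_smul_comm, mul_one, smul_sub, smul_smul, sub_eq_add_neg,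
    ← neg_smul]
  congr 2
  field_simp

theorem HasDerivAt.ringInverse_of_eq_mul [CompleteSpace R] (hW : HasDerivAt W (W x * A) x)
    (hWx : IsUnit (W x)) :
    HasDerivAt (fun t => Ring.inverse (W t)) (-(A * Ring.inverse (W x))) x := by
  obtain ⟨u, hu⟩ := hWx
  refine ((hasFDerivAt_ringInverse (𝕜 := 𝕜) u).comp_hasDerivAt_of_eq x hW hu).congr_deriv ?_
  simp [← hu, ← mul_assoc]

end IntegratingFactor

theorem HasDerivAt.mulVec_const {𝕜 : Type*} [NontriviallyNormedField 𝕜] [CompleteSpace 𝕜]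
    {m n : Type*} [Fintype m] [Fintype n] {M : 𝕜 → Matrix m n 𝕜} {M' : Matrix m n 𝕜} {x : 𝕜}
    (hM : HasDerivAt M M' x) (c : n → 𝕜) :
    HasDerivAt (fun t => M t *ᵥ c) (M' *ᵥ c) x := by
  classical
  let L : Matrix m n 𝕜 →ₗ[𝕜] m → 𝕜 :=
    (LinearMap.applyₗ c).comp Matrix.toLin'.toLinearMap
  exact L.toContinuousLinearMap.hasFDerivAt.comp_hasDerivAt x hM

section Rodrigues

variable {N S : ℕ} (p : Fin (S + 2) → ℂ)

theorem rodriguesP_inv_smul_add_succ {V : ℂ → Matrix (Fin N) (Fin N) ℂ} (n : ℕ) {x : ℂ}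
    (hx : ∏ j, (x - p j) ≠ 0) (hV : IsUnit (V x).det) :
    RodriguesP N S p (fun t => (∏ j, (t - p j))⁻¹ • V t) (n + S + 1) x =
      (∏ j, (x - p j)) • ((V x)⁻¹ * iteratedDeriv (n / (S + 1) + 1)
        (fun t => (t ^ (n % (S + 1)) * (∏ j, (t - p j)) ^ (n / (S + 1))) • V t) x) := by
  have hdiv : (n + S + 1) / (S + 1) = n / (S + 1) + 1 := by
    rw [add_assoc, Nat.add_div_right _ S.succ_pos]
  have hmod : (n + S + 1) % (S + 1) = n % (S + 1) := by rw [add_assoc, Nat.add_mod_right]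
  have hQ : ∀ᶠ t in nhds x, ∏ j, (t - p j) ≠ 0 :=
    (continuous_finsetProd _ fun j _ => continuous_id.sub continuous_const).continuousAt
      |>.eventually_ne hx
  have hcancel : (fun t => (t ^ (n % (S + 1)) * (∏ j, (t - p j)) ^ (n / (S + 1) + 1)) •
        ((∏ j, (t - p j))⁻¹ • V t))
      =ᶠ[nhds x] fun t => (t ^ (n % (S + 1)) * (∏ j, (t - p j)) ^ (n / (S + 1))) • V t := by
    filter_upwards [hQ] with t ht
    rw [smul_smul, pow_succ, mul_assoc, mul_assoc, mul_inv_cancel₀ ht, mul_one]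
  rw [RodriguesP, hdiv, hmod, hcancel.iteratedDeriv_eq]
  have hinv : ((∏ j, (x - p j))⁻¹ • V x)⁻¹ = (∏ j, (x - p j)) • (V x)⁻¹ :=
    Matrix.inv_eq_left_inv <| by
      rw [smul_mul_smul_comm, mul_inv_cancel₀ hx, one_smul, Matrix.nonsing_inv_mul _ hV]
  rw [hinv, smul_mul_assoc]

theorem hasDerivAt_rodriguesP {W : ℂ → Matrix (Fin N) (Fin N) ℂ}
    {A : Matrix (Fin N) (Fin N) ℂ} (n : ℕ) {x : ℂ} (hWa : AnalyticAt ℂ W x)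
    (hW : HasDerivAt W (W x * A) x) (hWx : IsUnit (W x)) :
    HasDerivAt (RodriguesP N S p W n)
      ((W x)⁻¹ * iteratedDeriv (n / (S + 1) + 1)
          (fun t => (t ^ (n % (S + 1)) * (∏ j, (t - p j)) ^ (n / (S + 1))) • W t) x
        - A * RodriguesP N S p W n x) x := by
  set f := fun t => (t ^ (n % (S + 1)) * (∏ j, (t - p j)) ^ (n / (S + 1))) • W t
  have hf : AnalyticAt ℂ f x := by fun_prop
  have hF : HasDerivAt (iteratedDeriv (n / (S + 1)) f)
      (iteratedDeriv (n / (S + 1) + 1) f x) x := by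
    rw [iteratedDeriv_succ, iteratedDeriv_eq_iterate]
    exact (hf.iterated_deriv _).differentiableAt.hasDerivAt
  have hinv : HasDerivAt (fun t => (W t)⁻¹) (-(A * (W x)⁻¹)) x := by
    simp only [Matrix.nonsing_inv_eq_ringInverse]
    exact hW.ringInverse_of_eq_mul hWx
  unfold RodriguesP
  refine (hinv.mul hF).congr_deriv ?_
  rw [neg_mul, mul_assoc, neg_add_eq_sub]

end Rodrigues

theorem stmt_12_general (N S : ℕ)
    (p : Fin (S + 2) → ℂ)
    (B : Fin (S + 2) → Matrix (Fin N) (Fin N) ℂ)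
    (U : Set ℂ) (hU : IsOpen U) (hUp : ∀ j, p j ∉ U)
    (W : ℂ → Matrix (Fin N) (Fin N) ℂ)
    (hWd : ∀ x ∈ U, HasDerivAt W (W x * (∑ j, (x - p j)⁻¹ • B j)) x)
    (hWi : ∀ x ∈ U, IsUnit (W x)) :
    (∀ x ∈ U,
      HasDerivAt (fun t => (∏ j, (t - p j))⁻¹ • W t)
        (((∏ j, (x - p j))⁻¹ • W x) *
          ((∑ j, (x - p j)⁻¹ • B j)
            - (deriv (fun t => ∏ j, (t - p j)) x / ∏ j, (x - p j)) •
                (1 : Matrix (Fin N) (Fin N) ℂ))) x)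
    ∧ (∀ n : ℕ, ∀ x ∈ U,
        RodriguesP N S p (fun t => (∏ j, (t - p j))⁻¹ • W t) (n + S + 1) x =
          (∏ j, (x - p j)) •
            ((W x)⁻¹ *
              iteratedDeriv (n / (S + 1) + 1)
                (fun t => (t ^ (n % (S + 1)) * (∏ j, (t - p j)) ^ (n / (S + 1))) • W t) x))
    ∧ ∀ (n : ℕ) (c : Fin N → ℂ), ∀ x ∈ U,
        HasDerivAt (fun t => RodriguesP N S p W n t *ᵥ c)
          ((∏ j, (x - p j))⁻¹ •
              (RodriguesP N S p (fun t => (∏ j, (t - p j))⁻¹ • W t) (n + S + 1) x *ᵥ c)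
            - (∑ j, (x - p j)⁻¹ • B j) *ᵥ (RodriguesP N S p W n x *ᵥ c)) x := by
  have hQ : ∀ x ∈ U, ∏ j, (x - p j) ≠ 0 := fun x hx =>
    Finset.prod_ne_zero_iff.2 fun j _ => sub_ne_zero.2 fun h => hUp j (h ▸ hx)
  have hWan : ∀ x ∈ U, AnalyticAt ℂ W x := DifferentiableOn.analyticOnNhd
    (fun x hx => (hWd x hx).differentiableAt.differentiableWithinAt) hU
  have hP : ∀ n, ∀ x ∈ U, _ := fun n x hx => rodriguesP_inv_smul_add_succ p n (hQ x hx)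
    ((Matrix.isUnit_iff_isUnit_det _).1 (hWi x hx))
  refine ⟨fun x hx => ?_, hP, fun n c x hx => ?_⟩
  · have hQd : DifferentiableAt ℂ (fun t => ∏ j, (t - p j)) x := by fun_prop
    exact hQd.hasDerivAt.inv_smul_of_eq_mul (hQ x hx) (hWd x hx)
  · convert (hasDerivAt_rodriguesP p n (hWan x hx) (hWd x hx) (hWi x hx)).mulVec_const c using 1
    rw [hP n x hx, smul_mulVec, inv_smul_smul₀ (hQ x hx), sub_mulVec, mulVec_mulVec]

/-- §4.3.2 of the paper: `W̃ = Q⁻¹ W` is an integrating factor for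
`B̃(x) = B(x) − (Q'(x)/Q(x)) I`; one has
`P_{n+S+1}^{(W̃)}(x) = Q(x) W(x)⁻¹ (d/dx)^{m+1} [ xⁱ Q(x)^m W(x) ]` (where
`n = (S+1)m + i`, `0 ≤ i ≤ S`), and consequently for every constant vector `c`
the function `y(x) = P_n^{(W)}(x) c` solves
`y' + B(x) y = Q(x)⁻¹ P_{n+S+1}^{(W̃)}(x) c`. -/
theorem stmt_12 (N S : ℕ) (hN : 1 ≤ N)
    (p : Fin (S + 2) → ℂ) (hp : Function.Injective p)
    (B : Fin (S + 2) → Matrix (Fin N) (Fin N) ℂ)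
    (U : Set ℂ) (hU : IsOpen U) (hUc : IsPreconnected U) (hUne : U.Nonempty)
    (hUsc : SimplyConnectedSpace U) (hUp : ∀ j, p j ∉ U)
    (W : ℂ → Matrix (Fin N) (Fin N) ℂ)
    (hWa : AnalyticOnNhd ℂ W U)
    (hWd : ∀ x ∈ U, HasDerivAt W (W x * (∑ j, (x - p j)⁻¹ • B j)) x)
    (hWi : ∀ x ∈ U, IsUnit (W x)) :
    (∀ x ∈ U,
      HasDerivAt (fun t => (∏ j, (t - p j))⁻¹ • W t)
        (((∏ j, (x - p j))⁻¹ • W x) *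
          ((∑ j, (x - p j)⁻¹ • B j)
            - (deriv (fun t => ∏ j, (t - p j)) x / ∏ j, (x - p j)) •
                (1 : Matrix (Fin N) (Fin N) ℂ))) x)
    ∧ (∀ n : ℕ, ∀ x ∈ U,
        RodriguesP N S p (fun t => (∏ j, (t - p j))⁻¹ • W t) (n + S + 1) x =
          (∏ j, (x - p j)) •
            ((W x)⁻¹ *
              iteratedDeriv (n / (S + 1) + 1)
                (fun t => (t ^ (n % (S + 1)) * (∏ j, (t - p j)) ^ (n / (S + 1))) • W t) x))
    ∧ ∀ (n : ℕ) (c : Fin N → ℂ), ∀ x ∈ U,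
        HasDerivAt (fun t => RodriguesP N S p W n t *ᵥ c)
          ((∏ j, (x - p j))⁻¹ •
              (RodriguesP N S p (fun t => (∏ j, (t - p j))⁻¹ • W t) (n + S + 1) x *ᵥ c)
            - (∑ j, (x - p j)⁻¹ • B j) *ᵥ (RodriguesP N S p W n x *ᵥ c)) x :=
  stmt_12_general N S p B U hU hUp W hWd hWi
end

section
/- Assume condition (INV), let D be a simply connected domain containing p_0, …, p_{S+1}, let g be analytic on D, and let g̃ (analytic on D) and B̃(x) = B(x) + (Q'(x)/Q(x)) I be as produced by the shifting substitution y = y_0 + Q ỹ of the previous lemma. Then for every polynomial φ̃ ∈ ℂ^N[x] of degree at most S there exist a polynomial φ ∈ ℂ^N[x] of degree at most S and a polynomial y_φ ∈ ℂ^N[x] of degree at most S+1 such that the substitution y = y_φ(x) + Q(x) ỹ transforms the corrected equation y'(x) + B(x) y(x) = Q(x)^{−1}[g(x) − φ(x)] into the corrected shifted equation ỹ'(x) + B̃(x) ỹ(x) = Q(x)^{−1}[g̃(x) − φ̃(x)]. -/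
open Matrix Set

/-- `SolvesAt N S p B rhs y x` : `y' (x) + B(x) y(x) = Q(x)⁻¹ rhs(x)`, where
`B(x) = Σⱼ (x − pⱼ)⁻¹ Bⱼ` and `Q(x) = Πⱼ (x − pⱼ)`. -/
def SolvesAt (N S : ℕ) (p : Fin (S + 2) → ℂ)
    (B : Fin (S + 2) → Matrix (Fin N) (Fin N) ℂ)
    (rhs y : ℂ → Fin N → ℂ) (x : ℂ) : Prop :=
  deriv y x + (∑ j, (x - p j)⁻¹ • B j) *ᵥ y x = (∏ l, (x - p l))⁻¹ • rhs x

/-- `SolvesShiftedAt N S p B rhs y x` : `y' (x) + B̃(x) y(x) = Q(x)⁻¹ rhs(x)`, where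
`B̃(x) = B(x) + (Q'(x)/Q(x)) I`. -/
noncomputable def SolvesShiftedAt (N S : ℕ) (p : Fin (S + 2) → ℂ)
    (B : Fin (S + 2) → Matrix (Fin N) (Fin N) ℂ)
    (rhs y : ℂ → Fin N → ℂ) (x : ℂ) : Prop :=
  deriv y x
      + ((∑ j, (x - p j)⁻¹ • B j)
          + (deriv (fun t => ∏ l, (t - p l)) x / ∏ l, (x - p l)) •
              (1 : Matrix (Fin N) (Fin N) ℂ)) *ᵥ y x
    = (∏ l, (x - p l))⁻¹ • rhs x

/-!
Write `Q = ∏ⱼ (X - pⱼ)` and `L w = Q (w' + B w)`. This polynomial operator sends `w` of degree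
`≤ m` to degree `≤ S + 1 + m`, with top coefficient `(m I + B_∞) wₘ`; since every `m I + B_∞` is
invertible, the coefficients of `Q φ̃` above degree `S` can be cancelled one at a time, giving `w`
of degree `≤ S + 1` with `φ := Q φ̃ - L w` of degree `≤ S`. Then `y_φ := y₀ + w` works: the given
substitution identifies `g̃ = Q⁻¹ g - (y₀' + B y₀)` pointwise, and `w' + B w = φ̃ - Q⁻¹ φ` absorbs
the correction.
-/

open Polynomial Finset Lagrange

section ClearedOperator

variable {R ι J : Type*} [CommRing R] [Fintype ι] [Fintype J]
  {Q : R[X]} {Qj : J → R[X]} {B : J → Matrix ι ι R} {d : ℕ}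

/-- `Q (w' + B w)` with the denominators cleared; in the application `Qj j = Q / (X - p j)`. -/
noncomputable def clearedOp (Q : R[X]) (Qj : J → R[X]) (B : J → Matrix ι ι R)
    (w : ι → R[X]) : ι → R[X] :=
  fun i => Q * derivative (w i) + ∑ j, Qj j * ((B j).map C *ᵥ w) i

lemma clearedOp_add (u v : ι → R[X]) :
    clearedOp Q Qj B (u + v) = clearedOp Q Qj B u + clearedOp Q Qj B v := by
  ext1 i
  simp only [clearedOp, mulVec_add, Pi.add_apply, derivative_add, mul_add, sum_add_distrib]
  ring

lemma map_C_mulVec_C_mul (M : Matrix ι ι R) (v : ι → R) (q : R[X]) :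
    M.map C *ᵥ (fun k => C (v k) * q) = fun i => C ((M *ᵥ v) i) * q := by
  ext1 i
  simp only [mulVec, dotProduct, map_apply, map_sum, map_mul, sum_mul, mul_assoc]

lemma eval_map_C_mulVec (M : Matrix ι ι R) (w : ι → R[X]) (x : R) (i : ι) :
    ((M.map C *ᵥ w) i).eval x = (M *ᵥ fun k => (w k).eval x) i := by
  simp [mulVec, dotProduct, eval_finsetSum]

lemma natDegree_clearedOp_C_mul_X_pow_le (hQ : Q.natDegree ≤ d + 2)
    (hQj : ∀ j, (Qj j).natDegree ≤ d + 1) (v : ι → R) (m : ℕ) (i : ι) :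
    (clearedOp Q Qj B (fun k => C (v k) * X ^ m) i).natDegree ≤ d + 1 + m := by
  simp only [clearedOp, map_C_mulVec_C_mul, derivative_C_mul_X_pow]
  refine natDegree_add_le_of_degree_le ?_ (natDegree_sum_le_of_forall_le _ _ fun j _ => ?_)
  · rcases m with _ | m
    · simp
    · refine natDegree_mul_le.trans ?_
      have := natDegree_C_mul_X_pow_le (v i * (m + 1 : ℕ)) m
      rw [Nat.add_sub_cancel]
      omega
  · have := natDegree_C_mul_X_pow_le ((B j *ᵥ v) i) m
    exact natDegree_mul_le.trans (by have := hQj j; omega)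

lemma coeff_mul_C_mul_X_pow_of_monic {P : R[X]} {n : ℕ} (hP : P.Monic) (hPn : P.natDegree = n)
    (a : R) (k : ℕ) : (P * (C a * X ^ k)).coeff (n + k) = a := by
  rw [show P * (C a * X ^ k) = C a * P * X ^ k by ring, coeff_mul_X_pow, coeff_C_mul, ← hPn,
    hP.coeff_natDegree, mul_one]

lemma coeff_clearedOp_C_mul_X_pow [DecidableEq ι] (hQ : Q.Monic) (hQd : Q.natDegree = d + 2)
    (hQj : ∀ j, (Qj j).Monic) (hQjd : ∀ j, (Qj j).natDegree = d + 1)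
    (v : ι → R) (m : ℕ) (i : ι) :
    (clearedOp Q Qj B (fun k => C (v k) * X ^ m) i).coeff (d + 1 + m)
      = (((m : R) • (1 : Matrix ι ι R) + ∑ j, B j) *ᵥ v) i := by
  have hder : (Q * (C (v i * m) * X ^ (m - 1))).coeff (d + 1 + m) = m * v i := by
    rcases m with _ | m
    · simp
    · rw [Nat.add_sub_cancel, show d + 1 + (m + 1) = d + 2 + m by omega,
        coeff_mul_C_mul_X_pow_of_monic hQ hQd, mul_comm]
  simp only [clearedOp, map_C_mulVec_C_mul, derivative_C_mul_X_pow, coeff_add, finsetSum_coeff,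
    hder, coeff_mul_C_mul_X_pow_of_monic (hQj _) (hQjd _), add_mulVec, smul_mulVec, one_mulVec,
    sum_mulVec, Pi.add_apply, Pi.smul_apply, smul_eq_mul, Finset.sum_apply]

theorem exists_degree_sub_clearedOp_le [DecidableEq ι] (hQ : Q.Monic) (hQd : Q.natDegree = d + 2)
    (hQj : ∀ j, (Qj j).Monic) (hQjd : ∀ j, (Qj j).natDegree = d + 1)
    (hB : ∀ k : ℕ, IsUnit ((k : R) • (1 : Matrix ι ι R) + ∑ j, B j)) :
    ∀ (m : ℕ) (r : ι → R[X]), (∀ i, (r i).degree ≤ ↑(d + m)) →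
      ∃ w : ι → R[X], (∀ i, (w i).degree < m) ∧
        ∀ i, (r i - clearedOp Q Qj B w i).degree ≤ d
  | 0, r, hr => ⟨0, fun i => by simp, fun i => by simpa [clearedOp] using hr i⟩
  | m + 1, r, hr => by
    obtain ⟨v, hv⟩ := mulVec_surjective_iff_isUnit.2 (hB m) fun i => (r i).coeff (d + 1 + m)
    set u : ι → R[X] := fun k => C (v k) * X ^ m
    have hru : ∀ i, (r i - clearedOp Q Qj B u i).degree ≤ ↑(d + m) := by
      refine fun i => (degree_le_iff_coeff_zero _ _).2 fun n hn => ?_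
      rw [coeff_sub]
      obtain rfl | hn : n = d + 1 + m ∨ d + 1 + m < n := by norm_cast at hn; omega
      · rw [coeff_clearedOp_C_mul_X_pow hQ hQd hQj hQjd, hv, sub_self]
      · rw [(degree_le_iff_coeff_zero _ _).1 (hr i) n (by norm_cast; omega),
          coeff_eq_zero_of_natDegree_lt ((natDegree_clearedOp_C_mul_X_pow_le hQd.le
            (fun j => (hQjd j).le) v m i).trans_lt hn), sub_self]
    obtain ⟨w, hw, hrw⟩ := exists_degree_sub_clearedOp_le hQ hQd hQj hQjd hB m _ hru
    refine ⟨w + u, fun i => ?_, fun i => ?_⟩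
    · exact (degree_add_le _ _).trans_lt (max_lt ((hw i).trans (by exact_mod_cast m.lt_succ_self))
        ((degree_C_mul_X_pow_le _ _).trans_lt (by exact_mod_cast m.lt_succ_self)))
    · rw [clearedOp_add, Pi.add_apply, ← sub_sub, sub_right_comm]
      exact hrw i

end ClearedOperator

lemma hasDerivAt_pi_eval {𝕜 ι : Type*} [NontriviallyNormedField 𝕜] [Fintype ι] (q : ι → 𝕜[X])
    (x : 𝕜) : HasDerivAt (fun t i => (q i).eval t) (fun i => (derivative (q i)).eval x) x :=
  hasDerivAt_pi.2 fun i => (q i).hasDerivAt x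

section Evaluation

variable {K ι J : Type*} [Field K] [Fintype ι] [Fintype J] {p : J → K} {x : K}

lemma eval_nodal_erase [DecidableEq J] (hx : x ∉ range p) (j : J) :
    (nodal (univ.erase j) p).eval x = (x - p j)⁻¹ * ∏ l, (x - p l) := by
  have hxj : x - p j ≠ 0 := sub_ne_zero.2 fun h => hx ⟨j, h.symm⟩
  rw [← eval_nodal, nodal_eq_mul_nodal_erase (mem_univ j), eval_mul, eval_sub, eval_X, eval_C,
    inv_mul_cancel_left₀ hxj]

lemma eval_clearedOp_nodal [DecidableEq J] (hx : x ∉ range p) (B : J → Matrix ι ι K)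
    (w : ι → K[X]) :
    (fun i => (clearedOp (nodal univ p) (fun j => nodal (univ.erase j) p) B w i).eval x)
      = (∏ l, (x - p l)) • ((fun i => (derivative (w i)).eval x)
          + (∑ j, (x - p j)⁻¹ • B j) *ᵥ fun i => (w i).eval x) := by
  ext i
  simp only [clearedOp, eval_add, eval_mul, eval_finsetSum, eval_map_C_mulVec, eval_nodal_erase hx,
    eval_nodal, sum_mulVec, smul_mulVec, Pi.smul_apply, Pi.add_apply, Finset.sum_apply, smul_eq_mul,
    mul_add, Finset.mul_sum]
  congr 1
  exact sum_congr rfl fun j _ => by ring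

end Evaluation

lemma eq_iff_eq_of_sub_eq_smul_sub {K M : Type*} [DivisionRing K] [AddCommGroup M] [Module K M]
    {a b c d : M} {k : K} (hk : k ≠ 0) (h : a - b = k • (c - d)) : a = b ↔ c = d := by
  rw [← sub_eq_zero, h, smul_eq_zero_iff_right hk, sub_eq_zero]

section ShiftedEquation

variable {N S : ℕ} {p : Fin (S + 2) → ℂ} {B : Fin (S + 2) → Matrix (Fin N) (Fin N) ℂ} {x : ℂ}

lemma prod_sub_ne_zero (hx : x ∉ range p) : ∏ l, (x - p l) ≠ 0 :=
  prod_ne_zero_iff.2 fun l _ h => hx ⟨l, (sub_eq_zero.1 h).symm⟩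

theorem solvesAt_add_smul_iff_solvesShiftedAt {P yt rhs rhs' : ℂ → Fin N → ℂ} (hx : x ∉ range p)
    (hP : DifferentiableAt ℂ P x) (hyt : DifferentiableAt ℂ yt x)
    (hrhs : rhs' x = (∏ l, (x - p l))⁻¹ • rhs x
      - (deriv P x + (∑ j, (x - p j)⁻¹ • B j) *ᵥ P x)) :
    SolvesAt N S p B rhs (fun t => P t + (∏ l, (t - p l)) • yt t) x ↔
      SolvesShiftedAt N S p B rhs' yt x := by
  have hQ : HasDerivAt (fun t => ∏ l, (t - p l)) (deriv (fun t => ∏ l, (t - p l)) x) x :=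
    (by fun_prop : DifferentiableAt ℂ (fun t => ∏ l, (t - p l)) x).hasDerivAt
  have hy : HasDerivAt (fun t => P t + (∏ l, (t - p l)) • yt t)
      (deriv P x + ((∏ l, (x - p l)) • deriv yt x + deriv (fun t => ∏ l, (t - p l)) x • yt x)) x :=
    hP.hasDerivAt.add (hQ.smul hyt.hasDerivAt)
  have hQx := prod_sub_ne_zero hx
  unfold SolvesAt SolvesShiftedAt
  rw [hy.deriv, hrhs]
  refine eq_iff_eq_of_sub_eq_smul_sub hQx ?_
  simp only [mulVec_add, add_mulVec, mulVec_smul, smul_mulVec, one_mulVec]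
  match_scalars <;> field_simp

lemma solvesShiftedAt_sub_smul (rhs : ℂ → Fin N → ℂ) :
    SolvesShiftedAt N S p B rhs (fun t => (t - x) • ((∏ l, (x - p l))⁻¹ • rhs x)) x := by
  have hy : HasDerivAt (fun t => (t - x) • ((∏ l, (x - p l))⁻¹ • rhs x))
      ((1 : ℂ) • ((∏ l, (x - p l))⁻¹ • rhs x)) x :=
    ((hasDerivAt_id x).sub_const x).smul_const _
  unfold SolvesShiftedAt
  rw [hy.deriv]
  simp

lemma SolvesShiftedAt.rhs_eq {rhs₁ rhs₂ y : ℂ → Fin N → ℂ} (hx : x ∉ range p)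
    (h₁ : SolvesShiftedAt N S p B rhs₁ y x) (h₂ : SolvesShiftedAt N S p B rhs₂ y x) :
    rhs₁ x = rhs₂ x :=
  smul_right_injective _ (inv_ne_zero (prod_sub_ne_zero hx)) (h₁.symm.trans h₂)

theorem rhs_eq_of_forall_solvesAt_add_smul_iff {P rhs rhs' : ℂ → Fin N → ℂ} (hx : x ∉ range p)
    (hP : DifferentiableAt ℂ P x)
    (h : ∀ yt : ℂ → Fin N → ℂ, DifferentiableAt ℂ yt x →
      (SolvesAt N S p B rhs (fun t => P t + (∏ l, (t - p l)) • yt t) x ↔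
        SolvesShiftedAt N S p B rhs' yt x)) :
    rhs' x = (∏ l, (x - p l))⁻¹ • rhs x - (deriv P x + (∑ j, (x - p j)⁻¹ • B j) *ᵥ P x) := by
  -- a test function vanishing at `x` whose shifted equation holds there
  set yt : ℂ → Fin N → ℂ := fun t => (t - x) • ((∏ l, (x - p l))⁻¹ • rhs' x)
  have hyt : DifferentiableAt ℂ yt x := by fun_prop
  have hsol := (h yt hyt).2 (solvesShiftedAt_sub_smul rhs')
  exact SolvesShiftedAt.rhs_eq hx (solvesShiftedAt_sub_smul rhs')
    ((solvesAt_add_smul_iff_solvesShiftedAt (rhs' := fun _ => _) hx hP hyt rfl).1 hsol)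

theorem solvesAt_correction_iff {g gt yt : ℂ → Fin N → ℂ} (hx : x ∉ range p)
    (y₀ w φt : Fin N → ℂ[X])
    (hsub : ∀ yt : ℂ → Fin N → ℂ, DifferentiableAt ℂ yt x →
      (SolvesAt N S p B g (fun t => (fun i => (y₀ i).eval t) + (∏ l, (t - p l)) • yt t) x ↔
        SolvesShiftedAt N S p B gt yt x))
    (hyt : DifferentiableAt ℂ yt x) :
    SolvesAt N S p B (fun t => g t - fun i => (nodal univ p * φt i
          - clearedOp (nodal univ p) (fun j => nodal (univ.erase j) p) B w i).eval t)
        (fun t => (fun i => (y₀ i + w i).eval t) + (∏ l, (t - p l)) • yt t) x ↔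
      SolvesShiftedAt N S p B (fun t => gt t - fun i => (φt i).eval t) yt x := by
  have hgt := rhs_eq_of_forall_solvesAt_add_smul_iff hx
    (hasDerivAt_pi_eval y₀ x).differentiableAt hsub
  have hL := eval_clearedOp_nodal hx B w
  refine solvesAt_add_smul_iff_solvesShiftedAt hx (hasDerivAt_pi_eval _ x).differentiableAt hyt ?_
  rw [(hasDerivAt_pi_eval _ x).deriv]
  rw [(hasDerivAt_pi_eval y₀ x).deriv] at hgt
  ext i
  set Bx := ∑ j, (x - p j)⁻¹ • B j
  have hadd : (Bx *ᵥ fun k => (y₀ k).eval x + (w k).eval x) i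
      = (Bx *ᵥ fun k => (y₀ k).eval x) i + (Bx *ᵥ fun k => (w k).eval x) i :=
    congrFun (mulVec_add _ _ _) i
  have hLi := congrFun hL i
  have hgti := congrFun hgt i
  simp only [Pi.add_apply, Pi.sub_apply, Pi.smul_apply, smul_eq_mul, eval_add, eval_sub, eval_mul,
    derivative_add, eval_nodal] at hLi hgti ⊢
  rw [hadd, hLi, hgti]
  field_simp [prod_sub_ne_zero hx]
  ring

end ShiftedEquation

theorem stmt_16_general (N S : ℕ)
    (p : Fin (S + 2) → ℂ)
    (B : Fin (S + 2) → Matrix (Fin N) (Fin N) ℂ)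
    (hinv : ∀ k : ℕ,
      (∀ j, IsUnit ((k : ℂ) • (1 : Matrix (Fin N) (Fin N) ℂ) + B j)) ∧
        IsUnit ((k : ℂ) • (1 : Matrix (Fin N) (Fin N) ℂ) + ∑ j, B j))
    (D : Set ℂ)
    (g : ℂ → Fin N → ℂ)
    (y₀p : Fin N → Polynomial ℂ) (hy₀p : ∀ i, (y₀p i).degree ≤ (S + 1 : ℕ))
    (gt : ℂ → Fin N → ℂ)
    (hsub : ∀ yt : ℂ → Fin N → ℂ, ∀ x ∈ D \ Set.range p, DifferentiableAt ℂ yt x →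
      (SolvesAt N S p B g
          (fun t => (fun i => (y₀p i).eval t) + (∏ l, (t - p l)) • yt t) x
        ↔ SolvesShiftedAt N S p B gt yt x)) :
    ∀ φt : Fin N → Polynomial ℂ, (∀ i, (φt i).degree ≤ (S : ℕ)) →
      ∃ φ yφ : Fin N → Polynomial ℂ,
        (∀ i, (φ i).degree ≤ (S : ℕ)) ∧ (∀ i, (yφ i).degree ≤ (S + 1 : ℕ)) ∧
        ∀ yt : ℂ → Fin N → ℂ, ∀ x ∈ D \ Set.range p, DifferentiableAt ℂ yt x →
          (SolvesAt N S p B (fun t => g t - fun i => (φ i).eval t)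
              (fun t => (fun i => (yφ i).eval t) + (∏ l, (t - p l)) • yt t) x
            ↔ SolvesShiftedAt N S p B (fun t => gt t - fun i => (φt i).eval t) yt x) := by
  intro φt hφt
  have hQφt : ∀ i, (nodal univ p * φt i).degree ≤ ↑(S + (S + 2)) := fun i =>
    (degree_mul_le _ _).trans <| by
      rw [degree_nodal, card_univ, Fintype.card_fin]
      exact (add_le_add le_rfl (hφt i)).trans (by norm_cast; omega)
  obtain ⟨w, hw, hφ⟩ := exists_degree_sub_clearedOp_le (Q := nodal univ p)
    (Qj := fun j => nodal (univ.erase j) p) nodal_monic (by simp [natDegree_nodal])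
    (fun _ => nodal_monic) (by simp [natDegree_nodal]) (fun k => (hinv k).2) (S + 2) _ hQφt
  exact ⟨_, fun i => y₀p i + w i, hφ,
    fun i => (degree_add_le _ _).trans (max_le (hy₀p i) (Order.le_of_lt_succ (hw i))),
    fun yt x hx hyt => solvesAt_correction_iff hx.2 y₀p w φt (fun yt hyt => hsub yt x hx hyt) hyt⟩

/-- Lemma 10 (corrections can be pulled back through the shifting substitution):
assume (INV), let `y = y₀ + Q ỹ` be the substitution of the previous lemma taking
`y' + B y = Q⁻¹ g` to `ỹ' + B̃ ỹ = Q⁻¹ g̃`. Then for every polynomial `φ̃` of degree at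
most `S` there are polynomials `φ` of degree at most `S` and `y_φ` of degree at most
`S+1` such that `y = y_φ + Q ỹ` takes `y' + B y = Q⁻¹ (g − φ)` to
`ỹ' + B̃ ỹ = Q⁻¹ (g̃ − φ̃)`. -/
theorem stmt_16 (N S : ℕ) (hN : 1 ≤ N)
    (p : Fin (S + 2) → ℂ) (hp : Function.Injective p)
    (B : Fin (S + 2) → Matrix (Fin N) (Fin N) ℂ)
    (hinv : ∀ k : ℕ,
      (∀ j, IsUnit ((k : ℂ) • (1 : Matrix (Fin N) (Fin N) ℂ) + B j)) ∧
        IsUnit ((k : ℂ) • (1 : Matrix (Fin N) (Fin N) ℂ) + ∑ j, B j))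
    (D : Set ℂ) (hD : IsOpen D) (hDc : IsPreconnected D)
    (hDsc : SimplyConnectedSpace D) (hpD : ∀ j, p j ∈ D)
    (g : ℂ → Fin N → ℂ) (hg : AnalyticOnNhd ℂ g D)
    (y₀p : Fin N → Polynomial ℂ) (hy₀p : ∀ i, (y₀p i).degree ≤ (S + 1 : ℕ))
    (gt : ℂ → Fin N → ℂ) (hgt : AnalyticOnNhd ℂ gt D)
    (hsub : ∀ yt : ℂ → Fin N → ℂ, ∀ x ∈ D \ Set.range p, DifferentiableAt ℂ yt x →
      (SolvesAt N S p B g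
          (fun t => (fun i => (y₀p i).eval t) + (∏ l, (t - p l)) • yt t) x
        ↔ SolvesShiftedAt N S p B gt yt x)) :
    ∀ φt : Fin N → Polynomial ℂ, (∀ i, (φt i).degree ≤ (S : ℕ)) →
      ∃ φ yφ : Fin N → Polynomial ℂ,
        (∀ i, (φ i).degree ≤ (S : ℕ)) ∧ (∀ i, (yφ i).degree ≤ (S + 1 : ℕ)) ∧
        ∀ yt : ℂ → Fin N → ℂ, ∀ x ∈ D \ Set.range p, DifferentiableAt ℂ yt x →
          (SolvesAt N S p B (fun t => g t - fun i => (φ i).eval t)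
              (fun t => (fun i => (yφ i).eval t) + (∏ l, (t - p l)) • yt t) x
            ↔ SolvesShiftedAt N S p B (fun t => gt t - fun i => (φt i).eval t) yt x) :=
  stmt_16_general N S p B hinv D g y₀p hy₀p gt hsub
end
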